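/- arXiv:2003.02081 — 8 statements merged into one kernel-verified Lean document; each statement's English description precedes it below -/
import Mathlib

section
/- Optimal relay beamforming under perfect CSI (Lemma 1): Assume u_i ≠ 0 and f_i ≠ 0 for all i. Then the supremum, over all feasible tuples (B_1,…,B_R), of SNR({B_i},{f_i}) equals the supremum, over all c ∈ ℝ^R with 0 ≤ c_i ≤ √(P_i/(‖u_i‖₂² + σ_R²)) for all i, of (∑_{i=1}^R c_i ‖f_i‖₂ ‖u_i‖₂)² / (σ_R² ∑_{i=1}^R c_i² ‖f_i‖₂² + σ_D²). Moreover, if c^♯ attains the latter supremum, then the rank-one matrices B_i = c_i^♯ (conj(f_i)/‖f_i‖₂)(u_i/‖u_i‖₂)ᴴ are feasible and attain the former supremum. -/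
noncomputable section

/-- Euclidean (ℓ²) norm of a complex vector. -/
def vnorm2 {n : ℕ} (v : Fin n → ℂ) : ℝ := Real.sqrt (∑ j, ‖v j‖ ^ 2)

/-- Received SNR of the two-hop AF relay network for relay BF matrices `B`
and second-hop channels `f`. -/
def SNRval (R : ℕ) (M : Fin R → ℕ) (σR2 σD2 : ℝ)
    (u : (i : Fin R) → Fin (M i) → ℂ)
    (B : (i : Fin R) → Matrix (Fin (M i)) (Fin (M i)) ℂ)
    (f : (i : Fin R) → Fin (M i) → ℂ) : ℝ :=
  ‖∑ i, ∑ j, ∑ k, f i j * B i j k * u i k‖ ^ 2 /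
    (σD2 + σR2 * ∑ i, ∑ k, ‖∑ j, B i j k * f i j‖ ^ 2)

/-- Feasibility: per-relay power constraints `‖B_i u_i‖² + σ_R² tr(B_iᴴ B_i) ≤ P_i`. -/
def FeasibleB (R : ℕ) (M : Fin R → ℕ) (σR2 : ℝ) (P : Fin R → ℝ)
    (u : (i : Fin R) → Fin (M i) → ℂ)
    (B : (i : Fin R) → Matrix (Fin (M i)) (Fin (M i)) ℂ) : Prop :=
  ∀ i, (∑ j, ‖∑ k, B i j k * u i k‖ ^ 2) + σR2 * ∑ j, ∑ k, ‖B i j k‖ ^ 2 ≤ P i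

/-!
For a single relay, Cauchy–Schwarz bounds the signal term `fᵀ B u` in two ways: by
`‖f‖ ‖B u‖`, which together with `‖B u‖ ≤ ‖B‖_F ‖u‖` and the power budget confines the effective
amplitude `c = |fᵀ B u| / (‖f‖ ‖u‖)` to `[0, √(P / (‖u‖² + σ_R²))]`, and by `‖Bᵀ f‖ ‖u‖`, which
shows that `B` forwards at least the noise `c² ‖f‖²`. Hence the SNR of any feasible tuple is
at most the amplitude objective at these `cᵢ`, while the rank-one matched beamformers
`cᵢ conj(fᵢ) conj(uᵢ)ᵀ / (‖fᵢ‖ ‖uᵢ‖)` meet the power budget and attain the amplitude objective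
exactly. The two suprema thus dominate each other.
-/

open Finset ComplexConjugate

lemma vnorm2_nonneg {n : ℕ} (v : Fin n → ℂ) : 0 ≤ vnorm2 v := Real.sqrt_nonneg _

lemma vnorm2_sq {n : ℕ} (v : Fin n → ℂ) : vnorm2 v ^ 2 = ∑ j, ‖v j‖ ^ 2 :=
  Real.sq_sqrt (sum_nonneg fun _ _ => sq_nonneg _)

lemma vnorm2_pos {n : ℕ} {v : Fin n → ℂ} (hv : v ≠ 0) : 0 < vnorm2 v := by
  obtain ⟨j, hj⟩ := Function.ne_iff.mp hv
  exact Real.sqrt_pos.mpr <|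
    sum_pos' (fun _ _ => sq_nonneg _) ⟨j, mem_univ _, pow_pos (norm_pos_iff.mpr hj) 2⟩

lemma norm_sum_mul_sq_le {n : ℕ} (a b : Fin n → ℂ) :
    ‖∑ j, a j * b j‖ ^ 2 ≤ vnorm2 a ^ 2 * vnorm2 b ^ 2 := by
  rw [← mul_pow]
  refine pow_le_pow_left₀ (norm_nonneg _) ?_ 2
  calc ‖∑ j, a j * b j‖ ≤ ∑ j, ‖a j‖ * ‖b j‖ := by
        simpa only [norm_mul] using norm_sum_le univ fun j => a j * b j
    _ ≤ vnorm2 a * vnorm2 b := Real.sum_mul_le_sqrt_mul_sqrt _ _ _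

lemma sum_mul_conj_self {n : ℕ} (v : Fin n → ℂ) :
    ∑ j, v j * conj (v j) = ((vnorm2 v ^ 2 : ℝ) : ℂ) := by
  simp only [vnorm2_sq, Complex.ofReal_sum, Complex.ofReal_pow, Complex.mul_conj']

section Bilinear

variable {m n : ℕ} (B : Matrix (Fin m) (Fin n) ℂ) (f : Fin m → ℂ) (u : Fin n → ℂ)

lemma bilin_eq_sum_mul_sum_mul :
    ∑ j, ∑ k, f j * B j k * u k = ∑ j, f j * ∑ k, B j k * u k := by
  simp only [mul_sum, mul_assoc]

lemma norm_bilin_sq_le_left :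
    ‖∑ j, ∑ k, f j * B j k * u k‖ ^ 2 ≤ vnorm2 f ^ 2 * ∑ j, ‖∑ k, B j k * u k‖ ^ 2 := by
  rw [bilin_eq_sum_mul_sum_mul, ← vnorm2_sq (fun j => ∑ k, B j k * u k)]
  exact norm_sum_mul_sq_le f fun j => ∑ k, B j k * u k

lemma norm_bilin_sq_le_right :
    ‖∑ j, ∑ k, f j * B j k * u k‖ ^ 2 ≤ (∑ k, ‖∑ j, B j k * f j‖ ^ 2) * vnorm2 u ^ 2 := by
  have h := norm_sum_mul_sq_le (fun k => ∑ j, B j k * f j) u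
  simp only [sum_mul] at h
  rw [vnorm2_sq (fun k => ∑ j, B j k * f j), sum_comm] at h
  simpa only [mul_comm (f _)] using h

lemma sum_norm_mulVec_sq_le :
    ∑ j, ‖∑ k, B j k * u k‖ ^ 2 ≤ (∑ j, ∑ k, ‖B j k‖ ^ 2) * vnorm2 u ^ 2 := by
  rw [sum_mul]
  refine sum_le_sum fun j _ => ?_
  simpa only [vnorm2_sq (B j)] using norm_sum_mul_sq_le (B j) u

lemma norm_bilin_sq_mul_le_power {σ : ℝ} (hσ : 0 ≤ σ) :
    ‖∑ j, ∑ k, f j * B j k * u k‖ ^ 2 * (vnorm2 u ^ 2 + σ) ≤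
      vnorm2 f ^ 2 * vnorm2 u ^ 2 *
        (∑ j, ‖∑ k, B j k * u k‖ ^ 2 + σ * ∑ j, ∑ k, ‖B j k‖ ^ 2) := by
  have hleft := norm_bilin_sq_le_left B f u
  have hpow := mul_le_mul_of_nonneg_left (sum_norm_mulVec_sq_le B u) (sq_nonneg (vnorm2 f))
  have hσpart := mul_le_mul_of_nonneg_left (hleft.trans hpow) hσ
  nlinarith [sq_nonneg (vnorm2 u)]

end Bilinear

section EffectiveAmplitude

variable {m n : ℕ}

/-- The amplitude `c` at which the rank-one beamformer `rankOneBF c f u` reproduces the signal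
magnitude `|fᵀ B u|` of `B`. -/
def effectiveAmplitude (B : Matrix (Fin m) (Fin n) ℂ) (f : Fin m → ℂ) (u : Fin n → ℂ) : ℝ :=
  ‖∑ j, ∑ k, f j * B j k * u k‖ / (vnorm2 f * vnorm2 u)

variable (B : Matrix (Fin m) (Fin n) ℂ) {f : Fin m → ℂ} {u : Fin n → ℂ}

lemma effectiveAmplitude_nonneg : 0 ≤ effectiveAmplitude B f u :=
  div_nonneg (norm_nonneg _) (mul_nonneg (vnorm2_nonneg f) (vnorm2_nonneg u))

variable (hf : f ≠ 0) (hu : u ≠ 0)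
include hf hu

lemma effectiveAmplitude_mul_mul :
    effectiveAmplitude B f u * vnorm2 f * vnorm2 u = ‖∑ j, ∑ k, f j * B j k * u k‖ := by
  have := (vnorm2_pos hf).ne'
  have := (vnorm2_pos hu).ne'
  unfold effectiveAmplitude
  field_simp

lemma effectiveAmplitude_sq_mul_le :
    effectiveAmplitude B f u ^ 2 * vnorm2 f ^ 2 ≤ ∑ k, ‖∑ j, B j k * f j‖ ^ 2 := by
  have := (vnorm2_pos hf).ne'
  have hu2 := pow_pos (vnorm2_pos hu) 2
  have key : effectiveAmplitude B f u ^ 2 * vnorm2 f ^ 2 =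
      ‖∑ j, ∑ k, f j * B j k * u k‖ ^ 2 / vnorm2 u ^ 2 := by
    unfold effectiveAmplitude
    field_simp
  rw [key, div_le_iff₀ hu2]
  exact norm_bilin_sq_le_right B f u

lemma effectiveAmplitude_le_sqrt {σ p : ℝ} (hσ : 0 ≤ σ)
    (hp : ∑ j, ‖∑ k, B j k * u k‖ ^ 2 + σ * ∑ j, ∑ k, ‖B j k‖ ^ 2 ≤ p) :
    effectiveAmplitude B f u ≤ Real.sqrt (p / (vnorm2 u ^ 2 + σ)) := by
  have hfu := mul_pos (vnorm2_pos hf) (vnorm2_pos hu)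
  refine Real.le_sqrt_of_sq_le ?_
  rw [effectiveAmplitude, div_pow, div_le_div_iff₀ (pow_pos hfu 2)
    (add_pos_of_pos_of_nonneg (pow_pos (vnorm2_pos hu) 2) hσ)]
  calc ‖∑ j, ∑ k, f j * B j k * u k‖ ^ 2 * (vnorm2 u ^ 2 + σ)
      ≤ vnorm2 f ^ 2 * vnorm2 u ^ 2 *
          (∑ j, ‖∑ k, B j k * u k‖ ^ 2 + σ * ∑ j, ∑ k, ‖B j k‖ ^ 2) :=
        norm_bilin_sq_mul_le_power B f u hσ
    _ ≤ p * (vnorm2 f * vnorm2 u) ^ 2 := by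
        rw [mul_comm p, mul_pow]
        exact mul_le_mul_of_nonneg_left hp (by positivity)

end EffectiveAmplitude

section RankOne

variable {m n : ℕ}

/-- Matched filtering on both hops: receive along `conj u`, transmit along `conj f`. -/
def rankOneBF (c : ℝ) (f : Fin m → ℂ) (u : Fin n → ℂ) : Matrix (Fin m) (Fin n) ℂ :=
  fun j k => (c : ℂ) * (conj (f j) / (vnorm2 f : ℂ)) * (conj (u k) / (vnorm2 u : ℂ))

variable (c : ℝ) {f : Fin m → ℂ} {u : Fin n → ℂ}

lemma sum_rankOneBF_mul_left (hf : f ≠ 0) (k : Fin n) :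
    ∑ j, rankOneBF c f u j k * f j = ((c * vnorm2 f / vnorm2 u : ℝ) : ℂ) * conj (u k) := by
  have : (vnorm2 f : ℂ) ≠ 0 := by exact_mod_cast (vnorm2_pos hf).ne'
  calc ∑ j, rankOneBF c f u j k * f j
      = c / (vnorm2 f * vnorm2 u) * conj (u k) * ∑ j, f j * conj (f j) := by
        rw [mul_sum]; congr 1 with j; simp only [rankOneBF]; ring
    _ = _ := by rw [sum_mul_conj_self]; push_cast; field_simp

lemma sum_rankOneBF_mul_right (hu : u ≠ 0) (j : Fin m) :
    ∑ k, rankOneBF c f u j k * u k = ((c * vnorm2 u / vnorm2 f : ℝ) : ℂ) * conj (f j) := by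
  have : (vnorm2 u : ℂ) ≠ 0 := by exact_mod_cast (vnorm2_pos hu).ne'
  calc ∑ k, rankOneBF c f u j k * u k
      = c / (vnorm2 f * vnorm2 u) * conj (f j) * ∑ k, u k * conj (u k) := by
        rw [mul_sum]; congr 1 with k; simp only [rankOneBF]; ring
    _ = _ := by rw [sum_mul_conj_self]; push_cast; field_simp

lemma bilin_rankOneBF (hf : f ≠ 0) (hu : u ≠ 0) :
    ∑ j, ∑ k, f j * rankOneBF c f u j k * u k = ((c * vnorm2 f * vnorm2 u : ℝ) : ℂ) := by
  have : (vnorm2 f : ℂ) ≠ 0 := by exact_mod_cast (vnorm2_pos hf).ne'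
  simp only [bilin_eq_sum_mul_sum_mul, sum_rankOneBF_mul_right c hu, mul_left_comm (f _),
    ← mul_sum, sum_mul_conj_self]
  push_cast
  field_simp

lemma sum_norm_sum_rankOneBF_mul_left_sq (hf : f ≠ 0) (hu : u ≠ 0) :
    ∑ k, ‖∑ j, rankOneBF c f u j k * f j‖ ^ 2 = c ^ 2 * vnorm2 f ^ 2 := by
  have := (vnorm2_pos hu).ne'
  simp only [sum_rankOneBF_mul_left c hf, norm_mul, Complex.norm_real, RCLike.norm_conj,
    Real.norm_eq_abs, mul_pow, sq_abs, ← mul_sum, ← vnorm2_sq]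
  field_simp

lemma sum_norm_sum_rankOneBF_mul_right_sq (hf : f ≠ 0) (hu : u ≠ 0) :
    ∑ j, ‖∑ k, rankOneBF c f u j k * u k‖ ^ 2 = c ^ 2 * vnorm2 u ^ 2 := by
  have := (vnorm2_pos hf).ne'
  simp only [sum_rankOneBF_mul_right c hu, norm_mul, Complex.norm_real, RCLike.norm_conj,
    Real.norm_eq_abs, mul_pow, sq_abs, ← mul_sum, ← vnorm2_sq]
  field_simp

lemma sum_norm_rankOneBF_sq (hf : f ≠ 0) (hu : u ≠ 0) :
    ∑ j, ∑ k, ‖rankOneBF c f u j k‖ ^ 2 = c ^ 2 := by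
  have := (vnorm2_pos hf).ne'
  have := (vnorm2_pos hu).ne'
  simp only [rankOneBF, norm_mul, norm_div, Complex.norm_real, RCLike.norm_conj,
    Real.norm_eq_abs, abs_of_nonneg (vnorm2_nonneg f), abs_of_nonneg (vnorm2_nonneg u), mul_pow,
    div_pow, sq_abs, ← mul_sum, ← sum_mul, ← sum_div, ← vnorm2_sq]
  field_simp

end RankOne

section Relays

variable {R : ℕ} {M : Fin R → ℕ}

def AmplitudeFeasible (σR2 : ℝ) (P : Fin R → ℝ) (u : (i : Fin R) → Fin (M i) → ℂ)
    (c : Fin R → ℝ) : Prop :=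
  ∀ i, 0 ≤ c i ∧ c i ≤ Real.sqrt (P i / ((vnorm2 (u i)) ^ 2 + σR2))

def amplitudeSNR (σR2 σD2 : ℝ) (u f : (i : Fin R) → Fin (M i) → ℂ) (c : Fin R → ℝ) : ℝ :=
  (∑ i, c i * vnorm2 (f i) * vnorm2 (u i)) ^ 2 /
    (σR2 * ∑ i, (c i) ^ 2 * (vnorm2 (f i)) ^ 2 + σD2)

variable {σR2 σD2 : ℝ} {P : Fin R → ℝ} {u f : (i : Fin R) → Fin (M i) → ℂ}

lemma feasibleB_rankOneBF (hσR : 0 ≤ σR2) (hP : ∀ i, 0 ≤ P i) (hu : ∀ i, u i ≠ 0)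
    (hf : ∀ i, f i ≠ 0) {c : Fin R → ℝ} (hc : AmplitudeFeasible σR2 P u c) :
    FeasibleB R M σR2 P u fun i => rankOneBF (c i) (f i) (u i) := by
  intro i
  have hd : 0 < vnorm2 (u i) ^ 2 + σR2 :=
    add_pos_of_pos_of_nonneg (pow_pos (vnorm2_pos (hu i)) 2) hσR
  have hc2 := (Real.le_sqrt (hc i).1 (div_nonneg (hP i) hd.le)).mp (hc i).2
  rw [le_div_iff₀ hd] at hc2
  rw [sum_norm_sum_rankOneBF_mul_right_sq _ (hf i) (hu i), sum_norm_rankOneBF_sq _ (hf i) (hu i)]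
  linarith

lemma snrVal_rankOneBF (hu : ∀ i, u i ≠ 0) (hf : ∀ i, f i ≠ 0) {c : Fin R → ℝ}
    (hc : ∀ i, 0 ≤ c i) :
    SNRval R M σR2 σD2 u (fun i => rankOneBF (c i) (f i) (u i)) f =
      amplitudeSNR σR2 σD2 u f c := by
  have hsum : 0 ≤ ∑ i, c i * vnorm2 (f i) * vnorm2 (u i) :=
    sum_nonneg fun i _ => mul_nonneg (mul_nonneg (hc i) (vnorm2_nonneg _)) (vnorm2_nonneg _)
  simp only [SNRval, amplitudeSNR, bilin_rankOneBF _ (hf _) (hu _),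
    sum_norm_sum_rankOneBF_mul_left_sq _ (hf _) (hu _), ← Complex.ofReal_sum, Complex.norm_real,
    Real.norm_eq_abs, abs_of_nonneg hsum, add_comm σD2]

/-- Replacing each `Bᵢ` by the rank-one beamformer of its effective amplitude keeps the magnitude
of every signal term, lets them add coherently, and does not increase the forwarded noise. -/
lemma exists_amplitudeFeasible_snrVal_le (hσR : 0 ≤ σR2) (hσD : 0 < σD2)
    (hu : ∀ i, u i ≠ 0) (hf : ∀ i, f i ≠ 0) {B : (i : Fin R) → Matrix (Fin (M i)) (Fin (M i)) ℂ}
    (hB : FeasibleB R M σR2 P u B) :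
    ∃ c, AmplitudeFeasible σR2 P u c ∧
      SNRval R M σR2 σD2 u B f ≤ amplitudeSNR σR2 σD2 u f c := by
  set c : Fin R → ℝ := fun i => effectiveAmplitude (B i) (f i) (u i)
  refine ⟨c, fun i => ⟨effectiveAmplitude_nonneg _,
    effectiveAmplitude_le_sqrt _ (hf i) (hu i) hσR (hB i)⟩, ?_⟩
  have hnum : ‖∑ i, ∑ j, ∑ k, f i j * B i j k * u i k‖ ^ 2 ≤
      (∑ i, c i * vnorm2 (f i) * vnorm2 (u i)) ^ 2 := by
    simp only [c, effectiveAmplitude_mul_mul _ (hf _) (hu _)]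
    exact pow_le_pow_left₀ (norm_nonneg _) (norm_sum_le _ _) 2
  have hden : σR2 * ∑ i, c i ^ 2 * vnorm2 (f i) ^ 2 + σD2 ≤
      σD2 + σR2 * ∑ i, ∑ k, ‖∑ j, B i j k * f i j‖ ^ 2 := by
    have := sum_le_sum fun i (_ : i ∈ univ) => effectiveAmplitude_sq_mul_le (B i) (hf i) (hu i)
    nlinarith
  have hpos : 0 < σR2 * ∑ i, c i ^ 2 * vnorm2 (f i) ^ 2 + σD2 :=
    add_pos_of_nonneg_of_pos (mul_nonneg hσR (sum_nonneg fun _ _ => by positivity)) hσD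
  exact div_le_div₀ (sq_nonneg _) hnum hpos hden

end Relays

theorem stmt0_general (R : ℕ) (M : Fin R → ℕ)
    (u f : (i : Fin R) → Fin (M i) → ℂ)
    (σR2 σD2 : ℝ) (hσR : 0 < σR2) (hσD : 0 < σD2)
    (P : Fin R → ℝ) (hP : ∀ i, 0 < P i)
    (hu : ∀ i, u i ≠ 0) (hf : ∀ i, f i ≠ 0) :
    (sSup {s : ℝ | ∃ B, FeasibleB R M σR2 P u B ∧ s = SNRval R M σR2 σD2 u B f} =
      sSup {s : ℝ | ∃ c : Fin R → ℝ,
        (∀ i, 0 ≤ c i ∧ c i ≤ Real.sqrt (P i / ((vnorm2 (u i)) ^ 2 + σR2))) ∧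
        s = (∑ i, c i * vnorm2 (f i) * vnorm2 (u i)) ^ 2 /
              (σR2 * ∑ i, (c i) ^ 2 * (vnorm2 (f i)) ^ 2 + σD2)}) ∧
    (∀ c : Fin R → ℝ,
      (∀ i, 0 ≤ c i ∧ c i ≤ Real.sqrt (P i / ((vnorm2 (u i)) ^ 2 + σR2))) →
      (∑ i, c i * vnorm2 (f i) * vnorm2 (u i)) ^ 2 /
          (σR2 * ∑ i, (c i) ^ 2 * (vnorm2 (f i)) ^ 2 + σD2) =
        sSup {s : ℝ | ∃ c' : Fin R → ℝ,
          (∀ i, 0 ≤ c' i ∧ c' i ≤ Real.sqrt (P i / ((vnorm2 (u i)) ^ 2 + σR2))) ∧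
          s = (∑ i, c' i * vnorm2 (f i) * vnorm2 (u i)) ^ 2 /
                (σR2 * ∑ i, (c' i) ^ 2 * (vnorm2 (f i)) ^ 2 + σD2)} →
      FeasibleB R M σR2 P u (fun i => fun j k =>
          (c i : ℂ) * ((starRingEnd ℂ) (f i j) / (vnorm2 (f i) : ℂ)) *
            ((starRingEnd ℂ) (u i k) / (vnorm2 (u i) : ℂ))) ∧
      SNRval R M σR2 σD2 u (fun i => fun j k =>
          (c i : ℂ) * ((starRingEnd ℂ) (f i j) / (vnorm2 (f i) : ℂ)) *
            ((starRingEnd ℂ) (u i k) / (vnorm2 (u i) : ℂ))) f =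
        sSup {s : ℝ | ∃ B, FeasibleB R M σR2 P u B ∧ s = SNRval R M σR2 σD2 u B f}) := by
  have hSup : sSup {s : ℝ | ∃ B, FeasibleB R M σR2 P u B ∧ s = SNRval R M σR2 σD2 u B f} =
      sSup {s : ℝ | ∃ c, AmplitudeFeasible σR2 P u c ∧ s = amplitudeSNR σR2 σD2 u f c} := by
    apply csSup_eq_csSup_of_forall_exists_le
    · rintro _ ⟨B, hB, rfl⟩
      obtain ⟨c, hc, hle⟩ := exists_amplitudeFeasible_snrVal_le hσR.le hσD hu hf hB
      exact ⟨_, ⟨c, hc, rfl⟩, hle⟩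
    · rintro _ ⟨c, hc, rfl⟩
      exact ⟨_, ⟨_, feasibleB_rankOneBF hσR.le (fun i => (hP i).le) hu hf hc, rfl⟩,
        (snrVal_rankOneBF hu hf fun i => (hc i).1).ge⟩
  refine ⟨hSup, fun c hc hopt => ⟨feasibleB_rankOneBF hσR.le (fun i => (hP i).le) hu hf hc, ?_⟩⟩
  exact (snrVal_rankOneBF hu hf fun i => (hc i).1).trans (hopt.trans hSup.symm)

theorem stmt0 (R : ℕ) (hR : 1 ≤ R) (M : Fin R → ℕ)
    (u f : (i : Fin R) → Fin (M i) → ℂ)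
    (σR2 σD2 : ℝ) (hσR : 0 < σR2) (hσD : 0 < σD2)
    (P : Fin R → ℝ) (hP : ∀ i, 0 < P i)
    (hu : ∀ i, u i ≠ 0) (hf : ∀ i, f i ≠ 0) :
    (sSup {s : ℝ | ∃ B, FeasibleB R M σR2 P u B ∧ s = SNRval R M σR2 σD2 u B f} =
      sSup {s : ℝ | ∃ c : Fin R → ℝ,
        (∀ i, 0 ≤ c i ∧ c i ≤ Real.sqrt (P i / ((vnorm2 (u i)) ^ 2 + σR2))) ∧
        s = (∑ i, c i * vnorm2 (f i) * vnorm2 (u i)) ^ 2 /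
              (σR2 * ∑ i, (c i) ^ 2 * (vnorm2 (f i)) ^ 2 + σD2)}) ∧
    (∀ c : Fin R → ℝ,
      (∀ i, 0 ≤ c i ∧ c i ≤ Real.sqrt (P i / ((vnorm2 (u i)) ^ 2 + σR2))) →
      (∑ i, c i * vnorm2 (f i) * vnorm2 (u i)) ^ 2 /
          (σR2 * ∑ i, (c i) ^ 2 * (vnorm2 (f i)) ^ 2 + σD2) =
        sSup {s : ℝ | ∃ c' : Fin R → ℝ,
          (∀ i, 0 ≤ c' i ∧ c' i ≤ Real.sqrt (P i / ((vnorm2 (u i)) ^ 2 + σR2))) ∧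
          s = (∑ i, c' i * vnorm2 (f i) * vnorm2 (u i)) ^ 2 /
                (σR2 * ∑ i, (c' i) ^ 2 * (vnorm2 (f i)) ^ 2 + σD2)} →
      FeasibleB R M σR2 P u (fun i => fun j k =>
          (c i : ℂ) * ((starRingEnd ℂ) (f i j) / (vnorm2 (f i) : ℂ)) *
            ((starRingEnd ℂ) (u i k) / (vnorm2 (u i) : ℂ))) ∧
      SNRval R M σR2 σD2 u (fun i => fun j k =>
          (c i : ℂ) * ((starRingEnd ℂ) (f i j) / (vnorm2 (f i) : ℂ)) *
            ((starRingEnd ℂ) (u i k) / (vnorm2 (u i) : ℂ))) f =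
        sSup {s : ℝ | ∃ B, FeasibleB R M σR2 P u B ∧ s = SNRval R M σR2 σD2 u B f}) :=
  stmt0_general R M u f σR2 σD2 hσR hσD P hP hu hf
end
end

section
/- Projection of relay beamformers onto the signal direction: Assume u_i ≠ 0 for all i and set û_i := u_i/‖u_i‖₂. Let (B_1,…,B_R) be any tuple of matrices B_i ∈ ℂ^{M_i×M_i} satisfying the power constraints ‖B_i u_i‖₂² + σ_R² tr(B_iᴴ B_i) ≤ P_i. Define B'_i := B_i û_i û_iᴴ. Then (B'_1,…,B'_R) also satisfies the power constraints, and for every tuple of second-hop channels (f_1,…,f_R) with f_i ∈ ℂ^{M_i}, one has SNR({B'_i},{f_i}) ≥ SNR({B_i},{f_i}). -/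
noncomputable section

/-!
Right multiplication by `û ûᴴ` fixes `u`, so it changes neither the signal `B_i u_i` nor the
numerator of the SNR. Since `‖û‖ ≤ 1`, Cauchy–Schwarz shows that it can only shrink every row
of `B_i` and the forwarded noise `B_iᵀ f_i`, hence the Frobenius norm in the power constraint
and the denominator of the SNR.
-/

open Finset

section RankOne

variable {𝕜 ι κ : Type*} [RCLike 𝕜] [Fintype ι]

lemma norm_sum_mul_sq_le_s4 (v w : ι → 𝕜) :
    ‖∑ k, v k * w k‖ ^ 2 ≤ (∑ k, ‖v k‖ ^ 2) * ∑ k, ‖w k‖ ^ 2 := by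
  calc ‖∑ k, v k * w k‖ ^ 2 ≤ (∑ k, ‖v k‖ * ‖w k‖) ^ 2 := by
        gcongr
        exact (norm_sum_le _ _).trans_eq (by simp only [norm_mul])
    _ ≤ _ := sum_mul_sq_le_sq_mul_sq _ _ _

variable {B B' : Matrix κ ι 𝕜} {w : ι → 𝕜}

lemma sum_mul_eq_of_rankOne {u : ι → 𝕜}
    (hB' : ∀ j k, B' j k = (∑ l, B j l * w l) * starRingEnd 𝕜 (w k))
    (hu : ∀ l, (∑ k, starRingEnd 𝕜 (w k) * u k) * w l = u l) (j : κ) :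
    ∑ k, B' j k * u k = ∑ k, B j k * u k := by
  calc ∑ k, B' j k * u k = ∑ l, B j l * ((∑ k, starRingEnd 𝕜 (w k) * u k) * w l) := by
        simp only [hB', mul_sum, sum_mul]
        rw [sum_comm]
        exact sum_congr rfl fun _ _ => sum_congr rfl fun _ _ => by ring
    _ = ∑ k, B j k * u k := by simp only [hu]

lemma sum_sum_norm_sq_le_of_rankOne [Fintype κ] (hw : ∑ k, ‖w k‖ ^ 2 ≤ 1)
    (hB' : ∀ j k, B' j k = (∑ l, B j l * w l) * starRingEnd 𝕜 (w k)) :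
    ∑ j, ∑ k, ‖B' j k‖ ^ 2 ≤ ∑ j, ∑ k, ‖B j k‖ ^ 2 := by
  refine sum_le_sum fun j _ => ?_
  calc ∑ k, ‖B' j k‖ ^ 2 = ‖∑ l, B j l * w l‖ ^ 2 * ∑ k, ‖w k‖ ^ 2 := by
        simp only [hB', norm_mul, mul_pow, RCLike.norm_conj, mul_sum]
    _ ≤ ‖∑ l, B j l * w l‖ ^ 2 := mul_le_of_le_one_right (by positivity) hw
    _ ≤ (∑ l, ‖B j l‖ ^ 2) * ∑ l, ‖w l‖ ^ 2 := norm_sum_mul_sq_le_s4 _ _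
    _ ≤ ∑ l, ‖B j l‖ ^ 2 := mul_le_of_le_one_right (by positivity) hw

lemma sum_norm_sq_transpose_le_of_rankOne [Fintype κ] (hw : ∑ k, ‖w k‖ ^ 2 ≤ 1)
    (hB' : ∀ j k, B' j k = (∑ l, B j l * w l) * starRingEnd 𝕜 (w k)) (f : κ → 𝕜) :
    ∑ k, ‖∑ j, B' j k * f j‖ ^ 2 ≤ ∑ k, ‖∑ j, B j k * f j‖ ^ 2 := by
  have hcol : ∀ k, ∑ j, B' j k * f j =
      starRingEnd 𝕜 (w k) * ∑ l, w l * ∑ j, B j l * f j := fun k => by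
    simp only [hB', mul_sum, sum_mul]
    rw [sum_comm]
    exact sum_congr rfl fun _ _ => sum_congr rfl fun _ _ => by ring
  calc ∑ k, ‖∑ j, B' j k * f j‖ ^ 2
      = (∑ k, ‖w k‖ ^ 2) * ‖∑ l, w l * ∑ j, B j l * f j‖ ^ 2 := by
        simp only [hcol, norm_mul, mul_pow, RCLike.norm_conj, sum_mul]
    _ ≤ ‖∑ l, w l * ∑ j, B j l * f j‖ ^ 2 := mul_le_of_le_one_left (by positivity) hw
    _ ≤ (∑ l, ‖w l‖ ^ 2) * ∑ l, ‖∑ j, B j l * f j‖ ^ 2 := norm_sum_mul_sq_le_s4 _ _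
    _ ≤ ∑ l, ‖∑ j, B j l * f j‖ ^ 2 := mul_le_of_le_one_left (by positivity) hw

end RankOne

section Normalize

variable {n : ℕ} {u uhat : Fin n → ℂ}

lemma sq_vnorm2 (u : Fin n → ℂ) : vnorm2 u ^ 2 = ∑ k, ‖u k‖ ^ 2 :=
  Real.sq_sqrt (by positivity)

lemma eq_zero_of_vnorm2_eq_zero (h : vnorm2 u = 0) (k : Fin n) : u k = 0 := by
  have hsum : ∑ k, ‖u k‖ ^ 2 = 0 := by rw [← sq_vnorm2, h, sq, zero_mul]
  simpa using (sum_eq_zero_iff_of_nonneg fun _ _ => by positivity).mp hsum k (mem_univ k)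

/-- Only `≤`: when `u = 0`, division by zero makes `û = 0`. -/
lemma sum_norm_sq_normalize_le_one (huhat : ∀ k, uhat k = u k / (vnorm2 u : ℂ)) :
    ∑ k, ‖uhat k‖ ^ 2 ≤ 1 := by
  simp only [huhat, norm_div, Complex.norm_real, Real.norm_eq_abs, div_pow, sq_abs,
    ← sum_div, ← sq_vnorm2]
  exact div_self_le_one _

lemma inner_normalize_smul_normalize (huhat : ∀ k, uhat k = u k / (vnorm2 u : ℂ)) (l : Fin n) :
    (∑ k, starRingEnd ℂ (uhat k) * u k) * uhat l = u l := by
  have hinner : ∑ k, starRingEnd ℂ (uhat k) * u k = (vnorm2 u : ℂ) := by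
    simp only [huhat, map_div₀, Complex.conj_ofReal, div_mul_eq_mul_div,
      ← Complex.normSq_eq_conj_mul_self, Complex.normSq_eq_norm_sq, ← sum_div]
    rw [← Complex.ofReal_sum, ← sq_vnorm2, Complex.ofReal_pow, sq, mul_self_div_self]
  rw [hinner, huhat]
  exact mul_div_cancel_of_imp' fun h => eq_zero_of_vnorm2_eq_zero (by exact_mod_cast h) l

end Normalize

section Network

variable {R : ℕ} {M : Fin R → ℕ} {u : (i : Fin R) → Fin (M i) → ℂ}
  {B B' : (i : Fin R) → Matrix (Fin (M i)) (Fin (M i)) ℂ} {σR2 : ℝ}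

lemma FeasibleB.of_le {P : Fin R → ℝ} (hB : FeasibleB R M σR2 P u B) (hσR : 0 ≤ σR2)
    (hsig : ∀ i j, ∑ k, B' i j k * u i k = ∑ k, B i j k * u i k)
    (hfrob : ∀ i, ∑ j, ∑ k, ‖B' i j k‖ ^ 2 ≤ ∑ j, ∑ k, ‖B i j k‖ ^ 2) :
    FeasibleB R M σR2 P u B' := fun i =>
  calc (∑ j, ‖∑ k, B' i j k * u i k‖ ^ 2) + σR2 * ∑ j, ∑ k, ‖B' i j k‖ ^ 2
      ≤ (∑ j, ‖∑ k, B i j k * u i k‖ ^ 2) + σR2 * ∑ j, ∑ k, ‖B i j k‖ ^ 2 := by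
        simp only [hsig]; gcongr _ + σR2 * ?_; exact hfrob i
    _ ≤ P i := hB i

lemma SNRval_le_of_le {σD2 : ℝ} (hσR : 0 ≤ σR2) (hσD : 0 < σD2)
    {f : (i : Fin R) → Fin (M i) → ℂ}
    (hsig : ∀ i j, ∑ k, B' i j k * u i k = ∑ k, B i j k * u i k)
    (hnoise : ∀ i, ∑ k, ‖∑ j, B' i j k * f i j‖ ^ 2 ≤ ∑ k, ‖∑ j, B i j k * f i j‖ ^ 2) :
    SNRval R M σR2 σD2 u B f ≤ SNRval R M σR2 σD2 u B' f := by
  unfold SNRval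
  simp only [mul_assoc, ← mul_sum, hsig]
  gcongr _ / (σD2 + σR2 * ?_)
  exact sum_le_sum fun i _ => hnoise i

end Network

theorem stmt4_general (R : ℕ) (M : Fin R → ℕ)
    (u : (i : Fin R) → Fin (M i) → ℂ)
    (σR2 σD2 : ℝ) (hσR : 0 < σR2) (hσD : 0 < σD2)
    (P : Fin R → ℝ)
    (B : (i : Fin R) → Matrix (Fin (M i)) (Fin (M i)) ℂ)
    (hB : FeasibleB R M σR2 P u B)
    -- `û_i := u_i / ‖u_i‖₂` and `B'_i := B_i û_i û_iᴴ`
    (uhat : (i : Fin R) → Fin (M i) → ℂ)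
    (huhat : ∀ i k, uhat i k = u i k / (vnorm2 (u i) : ℂ))
    (B' : (i : Fin R) → Matrix (Fin (M i)) (Fin (M i)) ℂ)
    (hB' : ∀ i j k, B' i j k = (∑ l, B i j l * uhat i l) * (starRingEnd ℂ) (uhat i k)) :
    FeasibleB R M σR2 P u B' ∧
    ∀ f : (i : Fin R) → Fin (M i) → ℂ,
      SNRval R M σR2 σD2 u B f ≤ SNRval R M σR2 σD2 u B' f := by
  have hunit i := sum_norm_sq_normalize_le_one (huhat i)
  have hsig i := sum_mul_eq_of_rankOne (hB' i) (inner_normalize_smul_normalize (huhat i))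
  exact ⟨hB.of_le hσR.le hsig fun i => sum_sum_norm_sq_le_of_rankOne (hunit i) (hB' i),
    fun f => SNRval_le_of_le hσR.le hσD hsig fun i =>
      sum_norm_sq_transpose_le_of_rankOne (hunit i) (hB' i) (f i)⟩

theorem stmt4 (R : ℕ) (hR : 1 ≤ R) (M : Fin R → ℕ)
    (u : (i : Fin R) → Fin (M i) → ℂ) (hu : ∀ i, u i ≠ 0)
    (σR2 σD2 : ℝ) (hσR : 0 < σR2) (hσD : 0 < σD2)
    (P : Fin R → ℝ) (hP : ∀ i, 0 < P i)
    (B : (i : Fin R) → Matrix (Fin (M i)) (Fin (M i)) ℂ)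
    (hB : FeasibleB R M σR2 P u B)
    -- `û_i := u_i / ‖u_i‖₂` and `B'_i := B_i û_i û_iᴴ`
    (uhat : (i : Fin R) → Fin (M i) → ℂ)
    (huhat : ∀ i k, uhat i k = u i k / (vnorm2 (u i) : ℂ))
    (B' : (i : Fin R) → Matrix (Fin (M i)) (Fin (M i)) ℂ)
    (hB' : ∀ i j k, B' i j k = (∑ l, B i j l * uhat i l) * (starRingEnd ℂ) (uhat i k)) :
    FeasibleB R M σR2 P u B' ∧
    ∀ f : (i : Fin R) → Fin (M i) → ℂ,
      SNRval R M σR2 σD2 u B f ≤ SNRval R M σR2 σD2 u B' f :=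
  stmt4_general R M u σR2 σD2 hσR hσD P B hB uhat huhat B' hB'
end
end

section
/- Worst case over a box attained at a vertex: Let R ≥ 1, σ_D² > 0, σ_R² ≥ 0, and let c_i ≥ 0, κ_i ≥ 0, and 0 ≤ ℓ_i ≤ h_i for i = 1,…,R. Define g : ℝ^R → ℝ by g(x) = (∑_{i=1}^R κ_i c_i x_i)² / (σ_R² ∑_{i=1}^R c_i² x_i² + σ_D²). Then the minimum of g over the box X = ∏_{i=1}^R [ℓ_i, h_i] equals the minimum of g over the finite vertex set V = {x ∈ ℝ^R : x_i ∈ {ℓ_i, h_i} for all i}; i.e., min_{x∈X} g(x) = min_{x∈V} g(x). -/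
/-!
Write the objective as `N x ^ 2 / D x` with `N x = ∑ κᵢ cᵢ xᵢ ≥ 0` on the box and let `m ≥ 0` be
its minimum over the vertices. Then `m ≤ N x ^ 2 / D x` amounts to `√m * √(D x) - N x ≤ 0`. The
function `√D` is the Euclidean norm of an affine function of `x` and `N` is linear, so
`√m * √D - N` is convex; by the maximum principle it is nonpositive on the convex hull of the
vertices, which is the box, as soon as it is nonpositive at the vertices.
-/

open Set

theorem convexHull_setOf_forall_eq_or_eq {𝕜 ι : Type*} [Finite ι] [Field 𝕜] [LinearOrder 𝕜]
    [IsStrictOrderedRing 𝕜] {l h : ι → 𝕜} (hlh : l ≤ h) :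
    convexHull 𝕜 {x : ι → 𝕜 | ∀ i, x i = l i ∨ x i = h i} = Icc l h := by
  have hV : {x : ι → 𝕜 | ∀ i, x i = l i ∨ x i = h i} = univ.pi fun i => {l i, h i} := by
    ext x; simp
  rw [hV, convexHull_pi, ← pi_univ_Icc]
  simp only [convexHull_pair, segment_eq_Icc (hlh _)]

theorem convexOn_sqrt_mul_sum_sq_add {ι : Type*} [Fintype ι] {σ β : ℝ} (hσ : 0 ≤ σ) (hβ : 0 ≤ β)
    (c : ι → ℝ) : ConvexOn ℝ univ fun x : ι → ℝ => √(σ * ∑ i, c i ^ 2 * x i ^ 2 + β) := by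
  set v : (ι → ℝ) → EuclideanSpace ℝ (Option ι) := fun x =>
    WithLp.toLp 2 fun o => o.elim (√β) fun i => √σ * c i * x i
  have hv : ∀ x, √(σ * ∑ i, c i ^ 2 * x i ^ 2 + β) = ‖v x‖ := by
    intro x
    rw [EuclideanSpace.norm_eq, Fintype.sum_option]
    simp [v, mul_pow, Real.sq_sqrt hσ, Real.sq_sqrt hβ, Finset.mul_sum, add_comm, mul_assoc]
  refine ⟨convex_univ, fun x _ y _ a b ha hb hab => ?_⟩
  have hv_comb : v (a • x + b • y) = a • v x + b • v y := by
    ext (_ | i)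
    · simp [v, ← add_mul, hab]
    · simp only [v, Pi.add_apply, Pi.smul_apply, smul_eq_mul, Option.elim_some, PiLp.add_apply,
        PiLp.smul_apply]
      ring
  simp only [hv, hv_comb, smul_eq_mul]
  calc ‖a • v x + b • v y‖ ≤ ‖a • v x‖ + ‖b • v y‖ := norm_add_le _ _
    _ = a * ‖v x‖ + b * ‖v y‖ := by
      rw [norm_smul, norm_smul, Real.norm_of_nonneg ha, Real.norm_of_nonneg hb]

theorem mul_sq_le_sq_of_mem_convexHull {E : Type*} [AddCommGroup E] [Module ℝ E] {s t : Set E}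
    {N S : E → ℝ} (hN : ConcaveOn ℝ t N) (hS : ConvexOn ℝ t S) (hst : s ⊆ t) {m : ℝ}
    (hm : 0 ≤ m) (hs : ∀ v ∈ s, 0 ≤ N v ∧ m * S v ^ 2 ≤ N v ^ 2) {x : E}
    (hx : x ∈ convexHull ℝ s) (hSx : 0 ≤ S x) : m * S x ^ 2 ≤ N x ^ 2 := by
  have hconv : ConvexOn ℝ t fun y => √m * S y - N y := (hS.smul (Real.sqrt_nonneg m)).sub hN
  obtain ⟨v, hv, hxv⟩ := hconv.exists_ge_of_mem_convexHull hst hx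
  have hvle : √m * S v ≤ N v := by
    refine le_of_sq_le_sq ?_ (hs v hv).1
    rw [mul_pow, Real.sq_sqrt hm]
    exact (hs v hv).2
  have hxle : √m * S x ≤ N x := by linarith
  calc m * S x ^ 2 = (√m * S x) ^ 2 := by rw [mul_pow, Real.sq_sqrt hm]
    _ ≤ N x ^ 2 := pow_le_pow_left₀ (by positivity) hxle 2

theorem stmt8_general (R : ℕ) (σR2 σD2 : ℝ) (hσD : 0 < σD2) (hσR : 0 ≤ σR2)
    (c κ l h : Fin R → ℝ) (hc : ∀ i, 0 ≤ c i) (hκ : ∀ i, 0 ≤ κ i)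
    (hl : ∀ i, 0 ≤ l i) (hlh : ∀ i, l i ≤ h i) :
    sInf ((fun x : Fin R → ℝ =>
          (∑ i, κ i * c i * x i) ^ 2 / (σR2 * ∑ i, (c i) ^ 2 * (x i) ^ 2 + σD2)) ''
        Set.Icc l h) =
      sInf ((fun x : Fin R → ℝ =>
          (∑ i, κ i * c i * x i) ^ 2 / (σR2 * ∑ i, (c i) ^ 2 * (x i) ^ 2 + σD2)) ''
        {x : Fin R → ℝ | ∀ i, x i = l i ∨ x i = h i}) := by
  set N : (Fin R → ℝ) → ℝ := fun x => ∑ i, κ i * c i * x i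
  set D : (Fin R → ℝ) → ℝ := fun x => σR2 * ∑ i, c i ^ 2 * x i ^ 2 + σD2
  set g : (Fin R → ℝ) → ℝ := fun x => N x ^ 2 / D x
  set V := {x : Fin R → ℝ | ∀ i, x i = l i ∨ x i = h i}
  have hD : ∀ x, 0 < D x := fun x => by positivity
  have hbdd : ∀ A, BddBelow (g '' A) := fun A => ⟨0, by rintro _ ⟨x, -, rfl⟩; positivity⟩
  have hbox : convexHull ℝ V = Icc l h := convexHull_setOf_forall_eq_or_eq hlh
  have hVbox : V ⊆ Icc l h := hbox ▸ subset_convexHull ℝ V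
  have hVne : (g '' V).Nonempty := ⟨_, l, fun i => Or.inl rfl, rfl⟩
  refine le_antisymm (csInf_le_csInf (hbdd _) hVne (image_mono hVbox))
    (le_csInf ⟨_, l, ⟨le_rfl, hlh⟩, rfl⟩ ?_)
  rintro _ ⟨x, hx, rfl⟩
  have hN : ConcaveOn ℝ univ N :=
    ((∑ i, (κ i * c i) • LinearMap.proj i : (Fin R → ℝ) →ₗ[ℝ] ℝ).concaveOn convex_univ).congr
      fun x _ => by simp [N]
  have hm : 0 ≤ sInf (g '' V) := le_csInf hVne (by rintro _ ⟨x, -, rfl⟩; positivity)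
  have key := mul_sq_le_sq_of_mem_convexHull hN (convexOn_sqrt_mul_sum_sq_add hσR hσD.le c)
    (subset_univ V) hm ?_ (hbox ▸ hx) (Real.sqrt_nonneg _)
  · rw [Real.sq_sqrt (hD x).le] at key
    exact (le_div_iff₀ (hD x)).2 key
  intro v hv
  refine ⟨Finset.sum_nonneg fun i _ =>
    mul_nonneg (mul_nonneg (hκ i) (hc i)) ((hl i).trans ((hVbox hv).1 i)), ?_⟩
  rw [Real.sq_sqrt (hD v).le, ← le_div_iff₀ (hD v)]
  exact csInf_le (hbdd V) ⟨v, hv, rfl⟩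

theorem stmt8 (R : ℕ) (hR : 1 ≤ R) (σR2 σD2 : ℝ) (hσD : 0 < σD2) (hσR : 0 ≤ σR2)
    (c κ l h : Fin R → ℝ) (hc : ∀ i, 0 ≤ c i) (hκ : ∀ i, 0 ≤ κ i)
    (hl : ∀ i, 0 ≤ l i) (hlh : ∀ i, l i ≤ h i) :
    sInf ((fun x : Fin R → ℝ =>
          (∑ i, κ i * c i * x i) ^ 2 / (σR2 * ∑ i, (c i) ^ 2 * (x i) ^ 2 + σD2)) ''
        Set.Icc l h) =
      sInf ((fun x : Fin R → ℝ =>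
          (∑ i, κ i * c i * x i) ^ 2 / (σR2 * ∑ i, (c i) ^ 2 * (x i) ^ 2 + σD2)) ''
        {x : Fin R → ℝ | ∀ i, x i = l i ∨ x i = h i}) :=
  stmt8_general R σR2 σD2 hσD hσR c κ l h hc hκ hl hlh
end

section
/- At least one relay transmits at full power at the optimum (Remark 1): Assume u_i ≠ 0, f̃_i ≠ 0, and 0 ≤ ε_i < ‖f̃_i‖₂ for all i (so every a ∈ B has strictly positive entries). Suppose c^♯ ∈ ℝ^R with 0 ≤ c_i^♯ ≤ √(P_i/(σ_R²+‖u_i‖₂²)) for all i attains the maximum of min_{a∈B} S(c,a) over this box, and suppose the optimal value min_{a∈B} S(c^♯,a) is strictly positive. Then there exists an index i with c_i^♯ = √(P_i/(σ_R²+‖u_i‖₂²)). -/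
/-
If no relay were at full power, every `c_i` would lie strictly below its bound, so the whole
vector could be scaled by some `t > 1` without leaving the box. Scaling by `t` multiplies the
numerator of `S(c, a)` by `t²` but the denominator by less (because `σ_D² > 0`), so it strictly
increases `S(c, a)` at every vertex where `S(c, a) > 0`, which is every vertex since the optimal
value is positive. As `B` is finite, the minimum over `B` strictly increases as well,
contradicting the optimality of `c`.
-/

noncomputable section

/-- The vertex set `𝓑 = {a : a_i = ‖f̃_i‖ ± ε_i}`. -/
def VertexB (R : ℕ) (φ ε : Fin R → ℝ) : Set (Fin R → ℝ) :=
  {a | ∀ i, a i = φ i + ε i ∨ a i = φ i - ε i}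

/-- The reduced SNR expression `S(c,a)` with effective gains `κ_i`. -/
def Sval (R : ℕ) (σR2 σD2 : ℝ) (κ c a : Fin R → ℝ) : ℝ :=
  (∑ i, a i * c i * κ i) ^ 2 / (σR2 * ∑ i, (a i) ^ 2 * (c i) ^ 2 + σD2)

open Filter Topology

theorem VertexB_eq_pi (R : ℕ) (φ ε : Fin R → ℝ) :
    VertexB R φ ε = Set.univ.pi fun i => {φ i + ε i, φ i - ε i} := by
  ext a
  simp [VertexB]

theorem VertexB_finite (R : ℕ) (φ ε : Fin R → ℝ) : (VertexB R φ ε).Finite := by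
  rw [VertexB_eq_pi]
  exact Set.Finite.pi fun i => (Set.finite_singleton _).insert _

theorem VertexB_nonempty (R : ℕ) (φ ε : Fin R → ℝ) : (VertexB R φ ε).Nonempty :=
  ⟨fun i => φ i + ε i, fun _ => Or.inl rfl⟩

theorem Sval_lt_Sval_smul {R : ℕ} {σR2 σD2 t : ℝ} {κ c a : Fin R → ℝ}
    (hσR : 0 ≤ σR2) (hσD : 0 < σD2) (ht : 1 < t) (hS : 0 < Sval R σR2 σD2 κ c a) :
    Sval R σR2 σD2 κ c a < Sval R σR2 σD2 κ (t • c) a := by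
  set N := ∑ i, a i * c i * κ i
  set D := ∑ i, a i ^ 2 * c i ^ 2
  have hD : 0 ≤ D := by positivity
  have hN : 0 < N ^ 2 := by
    refine (sq_nonneg N).lt_of_ne fun h => hS.ne' ?_
    rw [Sval, ← h, zero_div]
  have hnum : ∑ i, a i * (t • c) i * κ i = t * N := by
    simp only [Pi.smul_apply, smul_eq_mul, N, Finset.mul_sum]
    exact Finset.sum_congr rfl fun i _ => by ring
  have hden : ∑ i, a i ^ 2 * (t • c) i ^ 2 = t ^ 2 * D := by
    simp only [Pi.smul_apply, smul_eq_mul, D, Finset.mul_sum]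
    exact Finset.sum_congr rfl fun i _ => by ring
  rw [Sval, Sval, hnum, hden, div_lt_div_iff₀ (by positivity) (by positivity)]
  nlinarith [mul_pos (mul_pos hN hσD) (by nlinarith : 0 < t ^ 2 - 1)]

theorem exists_one_lt_forall_mul_lt {ι : Type*} [Finite ι] {c b : ι → ℝ}
    (h : ∀ i, c i < b i) : ∃ t, 1 < t ∧ ∀ i, t * c i < b i := by
  have hnear : ∀ᶠ t in 𝓝[>] (1 : ℝ), ∀ i, t * c i < b i := by
    refine nhdsWithin_le_nhds (eventually_all.2 fun i => ?_)
    exact ((continuous_mul_const (c i)).tendsto' 1 (c i) (one_mul _)).eventually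
      (gt_mem_nhds (h i))
  exact (hnear.and self_mem_nhdsWithin).exists.imp fun t ht => ⟨ht.2, ht.1⟩

theorem csInf_setOf_le {α : Type*} {B : Set α} (hB : B.Finite) (f : α → ℝ) {a : α}
    (ha : a ∈ B) : sInf {t | ∃ a ∈ B, t = f a} ≤ f a :=
  csInf_le ((hB.image f).bddBelow.mono (by rintro _ ⟨b, hb, rfl⟩; exact ⟨b, hb, rfl⟩)) ⟨a, ha, rfl⟩

theorem csInf_setOf_lt_csInf_setOf {α : Type*} {B : Set α} (hB : B.Finite) (hne : B.Nonempty)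
    {f g : α → ℝ} (h : ∀ a ∈ B, f a < g a) :
    sInf {t | ∃ a ∈ B, t = f a} < sInf {t | ∃ a ∈ B, t = g a} := by
  obtain ⟨a, ha, hmin⟩ := Set.exists_min_image B g hB hne
  have hga : sInf {t | ∃ a ∈ B, t = g a} = g a :=
    IsLeast.csInf_eq ⟨⟨a, ha, rfl⟩, fun _ ⟨b, hb, h⟩ => h ▸ hmin b hb⟩
  exact hga ▸ (csInf_setOf_le hB f ha).trans_lt (h a ha)

theorem stmt9_general (R : ℕ) (M : Fin R → ℕ)
    (u ftil : (i : Fin R) → Fin (M i) → ℂ) (ε : Fin R → ℝ)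
    (σR2 σD2 : ℝ) (hσR : 0 < σR2) (hσD : 0 < σD2)
    (P : Fin R → ℝ)
    (c : Fin R → ℝ)
    (hcbox : ∀ i, 0 ≤ c i ∧ c i ≤ Real.sqrt (P i / (σR2 + (vnorm2 (u i)) ^ 2)))
    (hopt : ∀ c' : Fin R → ℝ,
      (∀ i, 0 ≤ c' i ∧ c' i ≤ Real.sqrt (P i / (σR2 + (vnorm2 (u i)) ^ 2))) →
      sInf {t : ℝ | ∃ a ∈ VertexB R (fun i => vnorm2 (ftil i)) ε,
          t = Sval R σR2 σD2 (fun i => vnorm2 (u i)) c' a} ≤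
        sInf {t : ℝ | ∃ a ∈ VertexB R (fun i => vnorm2 (ftil i)) ε,
          t = Sval R σR2 σD2 (fun i => vnorm2 (u i)) c a})
    (hpos : 0 < sInf {t : ℝ | ∃ a ∈ VertexB R (fun i => vnorm2 (ftil i)) ε,
          t = Sval R σR2 σD2 (fun i => vnorm2 (u i)) c a}) :
    ∃ i, c i = Real.sqrt (P i / (σR2 + (vnorm2 (u i)) ^ 2)) := by
  by_contra! hbelow
  obtain ⟨t, ht, htc⟩ :=
    exists_one_lt_forall_mul_lt fun i => (hcbox i).2.lt_of_ne (hbelow i)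
  have hbox : ∀ i, 0 ≤ (t • c) i ∧ (t • c) i ≤ Real.sqrt (P i / (σR2 + vnorm2 (u i) ^ 2)) :=
    fun i => ⟨mul_nonneg (zero_le_one.trans ht.le) (hcbox i).1, (htc i).le⟩
  have hB := VertexB_finite R (fun i => vnorm2 (ftil i)) ε
  refine (hopt (t • c) hbox).not_gt (csInf_setOf_lt_csInf_setOf hB (VertexB_nonempty _ _ _) ?_)
  exact fun a ha => Sval_lt_Sval_smul hσR.le hσD ht (hpos.trans_le (csInf_setOf_le hB _ ha))

theorem stmt9 (R : ℕ) (hR : 1 ≤ R) (M : Fin R → ℕ)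
    (u ftil : (i : Fin R) → Fin (M i) → ℂ) (ε : Fin R → ℝ)
    (σR2 σD2 : ℝ) (hσR : 0 < σR2) (hσD : 0 < σD2)
    (P : Fin R → ℝ) (hP : ∀ i, 0 < P i)
    (hu : ∀ i, u i ≠ 0) (hf : ∀ i, ftil i ≠ 0)
    (hε : ∀ i, 0 ≤ ε i ∧ ε i < vnorm2 (ftil i))
    (c : Fin R → ℝ)
    (hcbox : ∀ i, 0 ≤ c i ∧ c i ≤ Real.sqrt (P i / (σR2 + (vnorm2 (u i)) ^ 2)))
    (hopt : ∀ c' : Fin R → ℝ,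
      (∀ i, 0 ≤ c' i ∧ c' i ≤ Real.sqrt (P i / (σR2 + (vnorm2 (u i)) ^ 2))) →
      sInf {t : ℝ | ∃ a ∈ VertexB R (fun i => vnorm2 (ftil i)) ε,
          t = Sval R σR2 σD2 (fun i => vnorm2 (u i)) c' a} ≤
        sInf {t : ℝ | ∃ a ∈ VertexB R (fun i => vnorm2 (ftil i)) ε,
          t = Sval R σR2 σD2 (fun i => vnorm2 (u i)) c a})
    (hpos : 0 < sInf {t : ℝ | ∃ a ∈ VertexB R (fun i => vnorm2 (ftil i)) ε,
          t = Sval R σR2 σD2 (fun i => vnorm2 (u i)) c a}) :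
    ∃ i, c i = Real.sqrt (P i / (σR2 + (vnorm2 (u i)) ^ 2)) :=
  stmt9_general R M u ftil ε σR2 σD2 hσR hσD P c hcbox hopt hpos
end
end

section
/- Power-preserving reallocation inequality (key step of Appendix C): Let R ≥ 1, σ_R² > 0, σ_D² > 0. For i = 1,…,R let w'_i ≥ w''_i ≥ 0 and c''_i ≥ 0, and define c̃'_i := c''_i √((w''_i + σ_R²)/(w'_i + σ_R²)). Then for every f ∈ ℝ^R with f_i ≥ 0 for all i: (∑_{i=1}^R f_i c̃'_i √(w'_i))² / (σ_R² ∑_{i=1}^R f_i² (c̃'_i)² + σ_D²) ≥ (∑_{i=1}^R f_i c''_i √(w''_i))² / (σ_R² ∑_{i=1}^R f_i² (c''_i)² + σ_D²). -/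
/-!
Rescaling relay `i` from `c''` to `c̃'` keeps its transmit power, so `c̃'² ≤ c''²` and the relay noise
`σ_R² ∑ f² c²` reaching the destination can only drop. Its signal amplitude `c √w` can only grow:
`c̃' √w' = c'' √w'' · √((w' / (w' + σ_R²)) / (w'' / (w'' + σ_R²)))` and `w ↦ w / (w + σ_R²)` is increasing.
Numerator and denominator of the SNR can therefore be compared term by term.
-/

open Finset

/-- Destination SNR with relay gains `c`, weights `f`, and `g i = √(w i)` the signal amplitude at relay `i`. -/
noncomputable def relaySNR {ι : Type*} [Fintype ι] (σR2 σD2 : ℝ) (f c g : ι → ℝ) : ℝ :=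
  (∑ i, f i * c i * g i) ^ 2 / (σR2 * ∑ i, f i ^ 2 * c i ^ 2 + σD2)

theorem relaySNR_le_relaySNR {ι : Type*} [Fintype ι] {σR2 σD2 : ℝ} (hσR : 0 ≤ σR2) (hσD : 0 < σD2)
    {f c c' g g' : ι → ℝ} (hf : ∀ i, 0 ≤ f i) (hcg : ∀ i, 0 ≤ c i * g i)
    (hgain : ∀ i, c i * g i ≤ c' i * g' i) (hc : ∀ i, c' i ^ 2 ≤ c i ^ 2) :
    relaySNR σR2 σD2 f c g ≤ relaySNR σR2 σD2 f c' g' := by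
  have hsignal : (∑ i, f i * c i * g i) ^ 2 ≤ (∑ i, f i * c' i * g' i) ^ 2 := by
    refine pow_le_pow_left₀ (sum_nonneg fun i _ => ?_) (sum_le_sum fun i _ => ?_) 2
    · rw [mul_assoc]
      exact mul_nonneg (hf i) (hcg i)
    · rw [mul_assoc, mul_assoc]
      exact mul_le_mul_of_nonneg_left (hgain i) (hf i)
  have hnoise : σR2 * ∑ i, f i ^ 2 * c' i ^ 2 + σD2 ≤ σR2 * ∑ i, f i ^ 2 * c i ^ 2 + σD2 := by
    gcongr σR2 * ∑ i, f i ^ 2 * ?_ + σD2 with i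
    exact hc i
  exact div_le_div₀ (sq_nonneg _) hsignal (by positivity) hnoise

theorem sq_mul_sqrt_le_sq {c x : ℝ} (hx : x ≤ 1) : (c * √x) ^ 2 ≤ c ^ 2 := by
  rw [mul_pow]
  have : √x ^ 2 ≤ 1 := pow_le_one₀ (Real.sqrt_nonneg x) (Real.sqrt_le_one.2 hx)
  nlinarith [sq_nonneg c]

theorem sqrt_le_sqrt_div_mul_sqrt {u v s : ℝ} (hu : 0 ≤ u) (huv : u ≤ v) (hs : 0 ≤ s) :
    √u ≤ √((u + s) / (v + s)) * √v := by
  rw [← Real.sqrt_mul' _ (hu.trans huv)]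
  apply Real.sqrt_le_sqrt
  rcases (add_nonneg (hu.trans huv) hs).eq_or_lt with h | h
  · obtain rfl : v = 0 := by linarith
    obtain rfl : u = 0 := by linarith
    simp
  · rw [div_mul_eq_mul_div, le_div_iff₀ h]
    nlinarith

theorem stmt11_general (R : ℕ) (σR2 σD2 : ℝ) (hσR : 0 < σR2) (hσD : 0 < σD2)
    (w' w'' c'' : Fin R → ℝ)
    (hw : ∀ i, w'' i ≤ w' i) (hw'' : ∀ i, 0 ≤ w'' i) (hc'' : ∀ i, 0 ≤ c'' i)
    (c' : Fin R → ℝ)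
    (hc' : ∀ i, c' i = c'' i * Real.sqrt ((w'' i + σR2) / (w' i + σR2)))
    (f : Fin R → ℝ) (hf : ∀ i, 0 ≤ f i) :
    (∑ i, f i * c' i * Real.sqrt (w' i)) ^ 2 /
        (σR2 * ∑ i, (f i) ^ 2 * (c' i) ^ 2 + σD2) ≥
      (∑ i, f i * c'' i * Real.sqrt (w'' i)) ^ 2 /
        (σR2 * ∑ i, (f i) ^ 2 * (c'' i) ^ 2 + σD2) := by
  have hcg : ∀ i, 0 ≤ c'' i * √(w'' i) := fun i => mul_nonneg (hc'' i) (Real.sqrt_nonneg _)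
  have hgain : ∀ i, c'' i * √(w'' i) ≤ c' i * √(w' i) := fun i => by
    rw [hc' i, mul_assoc]
    exact mul_le_mul_of_nonneg_left (sqrt_le_sqrt_div_mul_sqrt (hw'' i) (hw i) hσR.le) (hc'' i)
  have hc : ∀ i, c' i ^ 2 ≤ c'' i ^ 2 := fun i => by
    rw [hc' i]
    exact sq_mul_sqrt_le_sq (div_le_one_of_le₀ (by linarith [hw i]) (by linarith [hw i, hw'' i]))
  exact relaySNR_le_relaySNR hσR.le hσD hf hcg hgain hc

theorem stmt11 (R : ℕ) (hR : 1 ≤ R) (σR2 σD2 : ℝ) (hσR : 0 < σR2) (hσD : 0 < σD2)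
    (w' w'' c'' : Fin R → ℝ)
    (hw : ∀ i, w'' i ≤ w' i) (hw'' : ∀ i, 0 ≤ w'' i) (hc'' : ∀ i, 0 ≤ c'' i)
    (c' : Fin R → ℝ)
    (hc' : ∀ i, c' i = c'' i * Real.sqrt ((w'' i + σR2) / (w' i + σR2)))
    (f : Fin R → ℝ) (hf : ∀ i, 0 ≤ f i) :
    (∑ i, f i * c' i * Real.sqrt (w' i)) ^ 2 /
        (σR2 * ∑ i, (f i) ^ 2 * (c' i) ^ 2 + σD2) ≥
      (∑ i, f i * c'' i * Real.sqrt (w'' i)) ^ 2 /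
        (σR2 * ∑ i, (f i) ^ 2 * (c'' i) ^ 2 + σD2) :=
  stmt11_general R σR2 σD2 hσR hσD w' w'' c'' hw hw'' hc'' c' hc' f hf
end

section
/- Monotonicity of the worst-case SNR in the effective channel gains (core of Proposition 1): Assume f̃_i ≠ 0 and 0 ≤ ε_i ≤ ‖f̃_i‖₂ for all i. Define SNR : ℝ_{≥0}^R → ℝ by SNR(w) := sup over c ∈ ℝ^R with 0 ≤ c_i ≤ √(P_i/(σ_R² + w_i)) for all i, of min_{a∈B} (∑_{i=1}^R a_i c_i √(w_i))² / (σ_R² ∑_{i=1}^R a_i² c_i² + σ_D²). Then SNR is monotone nondecreasing: if w', w'' ∈ ℝ_{≥0}^R satisfy w'_i ≥ w''_i for all i, then SNR(w') ≥ SNR(w''). -/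
/-!
Fix a feasible power allocation `c` for the gains `w''` and let `w'' ≤ w'`. Rescaling
`c'ᵢ = cᵢ √w''ᵢ / √w'ᵢ` keeps every effective amplitude `cᵢ √wᵢ`, hence every numerator of the
worst-case SNR, unchanged, while `c' ≤ c` shrinks every denominator. The relay power
`c'ᵢ² (σ_R² + w'ᵢ) = c'ᵢ² σ_R² + cᵢ² w''ᵢ` does not exceed `cᵢ² (σ_R² + w''ᵢ) ≤ Pᵢ`, so `c'` is
feasible for `w'` and achieves at least the worst-case SNR of `c` at `w''`.
-/

noncomputable section

/-- The worst-case SNR as a function of the effective channel gains `w`,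
optimized over the power allocation factor `c`. -/
def SNRw (R : ℕ) (σR2 σD2 : ℝ) (P φ ε : Fin R → ℝ) (w : Fin R → ℝ) : ℝ :=
  sSup {s : ℝ | ∃ c : Fin R → ℝ,
    (∀ i, 0 ≤ c i ∧ c i ≤ Real.sqrt (P i / (σR2 + w i))) ∧
    s = sInf {t : ℝ | ∃ a ∈ VertexB R φ ε,
      t = (∑ i, a i * c i * Real.sqrt (w i)) ^ 2 /
            (σR2 * ∑ i, (a i) ^ 2 * (c i) ^ 2 + σD2)}}

open Finset

theorem le_sqrt_div_iff_sq_mul_le {c x σ P : ℝ} (hc : 0 ≤ c) (hσx : 0 < σ + x) (hP : 0 ≤ P) :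
    c ≤ √(P / (σ + x)) ↔ c ^ 2 * (σ + x) ≤ P := by
  rw [Real.le_sqrt hc (div_nonneg hP hσx.le), le_div_iff₀ hσx]

theorem mul_sqrt_le_sqrt_of_sq_mul_le {c x σ P : ℝ} (hc : 0 ≤ c) (hx : 0 ≤ x) (hσ : 0 ≤ σ)
    (h : c ^ 2 * (σ + x) ≤ P) : c * √x ≤ √P := by
  rw [Real.le_sqrt (by positivity) ((by positivity : 0 ≤ c ^ 2 * (σ + x)).trans h), mul_pow,
    Real.sq_sqrt hx]
  nlinarith [sq_nonneg c]

section Rescale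

variable {x y : ℝ} (c : ℝ)

/-- When `y = 0` the division is junk, but then `x = 0` as well and both sides vanish. -/
theorem mul_sqrt_div_sqrt_mul_sqrt (hx : 0 ≤ x) (hxy : x ≤ y) :
    c * √x / √y * √y = c * √x := by
  rcases (Real.sqrt_nonneg y).eq_or_lt with hy | hy
  · have : x = 0 := le_antisymm (hxy.trans (Real.sqrt_eq_zero'.mp hy.symm)) hx
    simp [this, ← hy]
  · exact div_mul_cancel₀ _ hy.ne'

variable {c}

theorem mul_sqrt_div_sqrt_le (hc : 0 ≤ c) (hxy : x ≤ y) : c * √x / √y ≤ c :=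
  div_le_of_le_mul₀ (Real.sqrt_nonneg y) hc
    (mul_le_mul_of_nonneg_left (Real.sqrt_le_sqrt hxy) hc)

theorem sq_mul_le_of_rescale {σ P : ℝ} (hσ : 0 ≤ σ) (hc : 0 ≤ c) (hx : 0 ≤ x) (hxy : x ≤ y)
    (h : c ^ 2 * (σ + x) ≤ P) : (c * √x / √y) ^ 2 * (σ + y) ≤ P := by
  have hy : 0 ≤ y := hx.trans hxy
  calc (c * √x / √y) ^ 2 * (σ + y)
      = (c * √x / √y) ^ 2 * σ + (c * √x / √y * √y) ^ 2 := by
        rw [mul_pow _ √y, Real.sq_sqrt hy]; ring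
    _ = (c * √x / √y) ^ 2 * σ + c ^ 2 * x := by
        rw [mul_sqrt_div_sqrt_mul_sqrt c hx hxy, mul_pow, Real.sq_sqrt hx]
    _ ≤ c ^ 2 * σ + c ^ 2 * x := by gcongr; exact mul_sqrt_div_sqrt_le hc hxy
    _ = c ^ 2 * (σ + x) := by ring
    _ ≤ P := h

end Rescale

namespace RelaySNR

variable {R : ℕ} (σR2 σD2 : ℝ)

def snr (a c w : Fin R → ℝ) : ℝ :=
  (∑ i, a i * c i * √(w i)) ^ 2 / (σR2 * ∑ i, a i ^ 2 * c i ^ 2 + σD2)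

def worstSNR (φ ε c w : Fin R → ℝ) : ℝ :=
  sInf {t | ∃ a ∈ VertexB R φ ε, t = snr σR2 σD2 a c w}

def Feasible (P w c : Fin R → ℝ) : Prop :=
  ∀ i, 0 ≤ c i ∧ c i ≤ √(P i / (σR2 + w i))

theorem SNRw_eq_sSup_worstSNR (P φ ε w : Fin R → ℝ) :
    SNRw R σR2 σD2 P φ ε w =
      sSup {s | ∃ c, Feasible σR2 P w c ∧ s = worstSNR σR2 σD2 φ ε c w} :=
  rfl

theorem feasible_zero (P w : Fin R → ℝ) : Feasible σR2 P w 0 :=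
  fun _ => ⟨le_rfl, Real.sqrt_nonneg _⟩

theorem vertexB_nonempty (φ ε : Fin R → ℝ) : (VertexB R φ ε).Nonempty :=
  ⟨φ + ε, fun _ => Or.inl rfl⟩

variable {σR2 σD2}

theorem feasible_iff {P w c : Fin R → ℝ} (hσR : 0 < σR2) (hP : ∀ i, 0 ≤ P i)
    (hw : ∀ i, 0 ≤ w i) :
    Feasible σR2 P w c ↔ ∀ i, 0 ≤ c i ∧ c i ^ 2 * (σR2 + w i) ≤ P i :=
  forall_congr' fun i => and_congr_right fun hc =>
    le_sqrt_div_iff_sq_mul_le hc (by linarith [hw i]) (hP i)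

theorem snr_denom_pos (hσR : 0 ≤ σR2) (hσD : 0 < σD2) (a c : Fin R → ℝ) :
    0 < σR2 * ∑ i, a i ^ 2 * c i ^ 2 + σD2 := by
  have : 0 ≤ ∑ i, a i ^ 2 * c i ^ 2 := sum_nonneg fun i _ => by positivity
  positivity

theorem snr_nonneg (hσR : 0 ≤ σR2) (hσD : 0 < σD2) (a c w : Fin R → ℝ) :
    0 ≤ snr σR2 σD2 a c w :=
  div_nonneg (sq_nonneg _) (snr_denom_pos hσR hσD a c).le

theorem snr_le_snr_of_gain_eq {a c c' w w' : Fin R → ℝ} (hσR : 0 ≤ σR2) (hσD : 0 < σD2)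
    (hgain : ∀ i, c' i * √(w' i) = c i * √(w i)) (hc : ∀ i, c' i ^ 2 ≤ c i ^ 2) :
    snr σR2 σD2 a c w ≤ snr σR2 σD2 a c' w' := by
  have hnum : ∑ i, a i * c' i * √(w' i) = ∑ i, a i * c i * √(w i) :=
    sum_congr rfl fun i _ => by rw [mul_assoc, hgain, mul_assoc]
  have hden : ∑ i, a i ^ 2 * c' i ^ 2 ≤ ∑ i, a i ^ 2 * c i ^ 2 :=
    sum_le_sum fun i _ => mul_le_mul_of_nonneg_left (hc i) (sq_nonneg _)
  rw [snr, snr, hnum]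
  gcongr

theorem snr_le_of_feasible {P a c w : Fin R → ℝ} (hσR : 0 < σR2) (hσD : 0 < σD2)
    (hP : ∀ i, 0 ≤ P i) (hw : ∀ i, 0 ≤ w i) (hc : Feasible σR2 P w c) :
    snr σR2 σD2 a c w ≤ (∑ i, |a i| * √(P i)) ^ 2 / σD2 := by
  rw [feasible_iff hσR hP hw] at hc
  have hamp : ∀ i, |a i * c i * √(w i)| ≤ |a i| * √(P i) := fun i => by
    rw [mul_assoc, abs_mul, abs_of_nonneg (mul_nonneg (hc i).1 (Real.sqrt_nonneg _))]
    exact mul_le_mul_of_nonneg_left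
      (mul_sqrt_le_sqrt_of_sq_mul_le (hc i).1 (hw i) hσR.le (hc i).2) (abs_nonneg _)
  have hsum := (abs_sum_le_sum_abs _ _).trans (sum_le_sum fun i (_ : i ∈ univ) => hamp i)
  have hden : σD2 ≤ σR2 * ∑ i, a i ^ 2 * c i ^ 2 + σD2 :=
    le_add_of_nonneg_left (mul_nonneg hσR.le (sum_nonneg fun i _ => by positivity))
  exact div_le_div₀ (sq_nonneg _) (sq_le_sq' (abs_le.mp hsum).1 (abs_le.mp hsum).2) hσD hden

theorem worstSNR_le {φ ε a c w : Fin R → ℝ} (hσR : 0 ≤ σR2) (hσD : 0 < σD2)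
    (ha : a ∈ VertexB R φ ε) : worstSNR σR2 σD2 φ ε c w ≤ snr σR2 σD2 a c w :=
  csInf_le ⟨0, by rintro _ ⟨a, -, rfl⟩; exact snr_nonneg hσR hσD a c w⟩ ⟨a, ha, rfl⟩

theorem worstSNR_le_worstSNR_of_gain_eq {φ ε c c' w w' : Fin R → ℝ} (hσR : 0 ≤ σR2)
    (hσD : 0 < σD2) (hgain : ∀ i, c' i * √(w' i) = c i * √(w i))
    (hc : ∀ i, c' i ^ 2 ≤ c i ^ 2) :
    worstSNR σR2 σD2 φ ε c w ≤ worstSNR σR2 σD2 φ ε c' w' := by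
  obtain ⟨a₀, ha₀⟩ := vertexB_nonempty φ ε
  refine le_csInf ⟨_, a₀, ha₀, rfl⟩ ?_
  rintro _ ⟨a, ha, rfl⟩
  exact (worstSNR_le hσR hσD ha).trans (snr_le_snr_of_gain_eq hσR hσD hgain hc)

theorem bddAbove_worstSNR {P φ ε w : Fin R → ℝ} (hσR : 0 < σR2) (hσD : 0 < σD2)
    (hP : ∀ i, 0 ≤ P i) (hw : ∀ i, 0 ≤ w i) :
    BddAbove {s | ∃ c, Feasible σR2 P w c ∧ s = worstSNR σR2 σD2 φ ε c w} := by
  obtain ⟨a, ha⟩ := vertexB_nonempty φ ε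
  refine ⟨(∑ i, |a i| * √(P i)) ^ 2 / σD2, ?_⟩
  rintro _ ⟨c, hc, rfl⟩
  exact (worstSNR_le hσR.le hσD ha).trans (snr_le_of_feasible hσR hσD hP hw hc)

theorem monotoneOn_SNRw {P : Fin R → ℝ} (φ ε : Fin R → ℝ) (hσR : 0 < σR2) (hσD : 0 < σD2)
    (hP : ∀ i, 0 ≤ P i) : MonotoneOn (SNRw R σR2 σD2 P φ ε) {w | 0 ≤ w} := by
  intro w'' (hw'' : ∀ i, 0 ≤ w'' i) w' (hw' : ∀ i, 0 ≤ w' i) (hw : ∀ i, w'' i ≤ w' i)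
  rw [SNRw_eq_sSup_worstSNR, SNRw_eq_sSup_worstSNR]
  refine csSup_le ⟨_, 0, feasible_zero σR2 P w'', rfl⟩ ?_
  rintro _ ⟨c, hc, rfl⟩
  rw [feasible_iff hσR hP hw''] at hc
  let c' i := c i * √(w'' i) / √(w' i)
  have hc' : Feasible σR2 P w' c' := (feasible_iff hσR hP hw').mpr fun i =>
    ⟨div_nonneg (mul_nonneg (hc i).1 (Real.sqrt_nonneg _)) (Real.sqrt_nonneg _),
      sq_mul_le_of_rescale hσR.le (hc i).1 (hw'' i) (hw i) (hc i).2⟩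
  refine le_csSup_of_le (bddAbove_worstSNR hσR hσD hP hw') ⟨c', hc', rfl⟩ ?_
  exact worstSNR_le_worstSNR_of_gain_eq hσR.le hσD
    (fun i => mul_sqrt_div_sqrt_mul_sqrt _ (hw'' i) (hw i))
    (fun i => pow_le_pow_left₀ (hc' i).1 (mul_sqrt_div_sqrt_le (hc i).1 (hw i)) 2)

end RelaySNR

theorem stmt12_general (R : ℕ) (M : Fin R → ℕ)
    (ftil : (i : Fin R) → Fin (M i) → ℂ) (ε : Fin R → ℝ)
    (σR2 σD2 : ℝ) (hσR : 0 < σR2) (hσD : 0 < σD2)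
    (P : Fin R → ℝ) (hP : ∀ i, 0 < P i)
    (w' w'' : Fin R → ℝ) (hw'' : ∀ i, 0 ≤ w'' i) (hw : ∀ i, w'' i ≤ w' i) :
    SNRw R σR2 σD2 P (fun i => vnorm2 (ftil i)) ε w'' ≤
      SNRw R σR2 σD2 P (fun i => vnorm2 (ftil i)) ε w' :=
  RelaySNR.monotoneOn_SNRw _ ε hσR hσD (fun i => (hP i).le) hw'' (fun i => (hw'' i).trans (hw i)) hw

theorem stmt12 (R : ℕ) (hR : 1 ≤ R) (M : Fin R → ℕ)
    (ftil : (i : Fin R) → Fin (M i) → ℂ) (ε : Fin R → ℝ)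
    (σR2 σD2 : ℝ) (hσR : 0 < σR2) (hσD : 0 < σD2)
    (P : Fin R → ℝ) (hP : ∀ i, 0 < P i)
    (hf : ∀ i, ftil i ≠ 0) (hε : ∀ i, 0 ≤ ε i ∧ ε i ≤ vnorm2 (ftil i))
    (w' w'' : Fin R → ℝ) (hw'' : ∀ i, 0 ≤ w'' i) (hw : ∀ i, w'' i ≤ w' i) :
    SNRw R σR2 σD2 P (fun i => vnorm2 (ftil i)) ε w'' ≤
      SNRw R σR2 σD2 P (fun i => vnorm2 (ftil i)) ε w' :=
  stmt12_general R M ftil ε σR2 σD2 hσR hσD P hP w' w'' hw'' hw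
end
end

section
/- Pareto-optimal points use full source power (Lemma 4): Let P_s > 0 and U := {w ∈ ℝ^R : there exists a Hermitian positive semidefinite matrix G ∈ ℂ^{N_T×N_T} with tr(G) ≤ P_s and w_i = tr(H_iᴴ H_i G) for all i}. Suppose w ∈ U, w ≠ 0, and w is Pareto optimal in U, meaning there is no w' ∈ U with w'_i ≥ w_i for all i and w' ≠ w. Then every Hermitian positive semidefinite G ∈ ℂ^{N_T×N_T} with tr(G) ≤ P_s and tr(H_iᴴ H_i G) = w_i for all i satisfies tr(G) = P_s. -/
/-! If `tr G < P_s`, the scaled covariance `(P_s / tr G) • G` is still feasible and multiplies every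
`w_i = tr(H_iᴴ H_i G) ≥ 0` by the factor `P_s / tr G > 1`; as `w ≠ 0` this strictly dominates `w`. -/

open Matrix
open scoped ComplexOrder

noncomputable section

theorem Matrix.PosSemidef.trace_conjTranspose_mul_self_mul_nonneg {m n R : Type*} [Fintype m]
    [Fintype n] [CommRing R] [PartialOrder R] [StarRing R] [AddLeftMono R]
    {G : Matrix n n R} (hG : G.PosSemidef) (A : Matrix m n R) :
    0 ≤ (Aᴴ * A * G).trace := by
  rw [Matrix.mul_assoc, trace_mul_comm]
  exact (hG.mul_mul_conjTranspose_same A).trace_nonneg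

theorem Matrix.PosSemidef.trace_re_pos_of_ne_zero {n : Type*} [Fintype n]
    {G : Matrix n n ℂ} (hG : G.PosSemidef) (hG0 : G ≠ 0) : 0 < G.trace.re := by
  obtain ⟨hre, him⟩ := Complex.nonneg_iff.mp hG.trace_nonneg
  exact hre.lt_of_ne fun h0 => hG0 (hG.trace_eq_zero_iff.mp (Complex.ext h0.symm him.symm))

theorem stmt14_general (R NT : ℕ) (M : Fin R → ℕ)
    (H : (i : Fin R) → Matrix (Fin (M i)) (Fin NT) ℂ)
    (Ps : ℝ)
    (U : Set (Fin R → ℝ))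
    (hU : U = {w : Fin R → ℝ | ∃ G : Matrix (Fin NT) (Fin NT) ℂ,
      G.PosSemidef ∧ G.trace.re ≤ Ps ∧ ∀ i, w i = (((H i)ᴴ * H i * G).trace).re})
    (w : Fin R → ℝ) (hw0 : w ≠ 0)
    (hPareto : ¬ ∃ w' ∈ U, (∀ i, w i ≤ w' i) ∧ w' ≠ w) :
    ∀ G : Matrix (Fin NT) (Fin NT) ℂ,
      G.PosSemidef → G.trace.re ≤ Ps →
      (∀ i, (((H i)ᴴ * H i * G).trace).re = w i) →
      G.trace.re = Ps := by
  intro G hG hle hw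
  have hw_nonneg : 0 ≤ w := fun i =>
    hw i ▸ (Complex.nonneg_iff.mp (hG.trace_conjTranspose_mul_self_mul_nonneg (H i))).1
  have htr : 0 < G.trace.re := hG.trace_re_pos_of_ne_zero fun hG0 =>
    hw0 (funext fun i => by simp [← hw i, hG0])
  by_contra hne
  set c := Ps / G.trace.re
  have hc : 1 < c := (one_lt_div htr).mpr (hle.lt_of_ne hne)
  refine hPareto ⟨c • w, hU ▸ ⟨c • G, hG.smul (zero_lt_one.trans hc).le, ?_, fun i => ?_⟩,
    fun i => le_smul_of_one_le_left (hw_nonneg i) hc.le, fun h => hc.ne' ?_⟩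
  · simp [c, div_mul_cancel₀ _ htr.ne']
  · simp [hw i]
  · exact smul_left_injective ℝ hw0 (h.trans (one_smul ℝ w).symm)

theorem stmt14 (R NT : ℕ) (hR : 1 ≤ R) (M : Fin R → ℕ)
    (H : (i : Fin R) → Matrix (Fin (M i)) (Fin NT) ℂ)
    (Ps : ℝ) (hPs : 0 < Ps)
    (U : Set (Fin R → ℝ))
    (hU : U = {w : Fin R → ℝ | ∃ G : Matrix (Fin NT) (Fin NT) ℂ,
      G.PosSemidef ∧ G.trace.re ≤ Ps ∧ ∀ i, w i = (((H i)ᴴ * H i * G).trace).re})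
    (w : Fin R → ℝ) (hw : w ∈ U) (hw0 : w ≠ 0)
    (hPareto : ¬ ∃ w' ∈ U, (∀ i, w i ≤ w' i) ∧ w' ≠ w) :
    ∀ G : Matrix (Fin NT) (Fin NT) ℂ,
      G.PosSemidef → G.trace.re ≤ Ps →
      (∀ i, (((H i)ᴴ * H i * G).trace).re = w i) →
      G.trace.re = Ps :=
  stmt14_general R NT M H Ps U hU w hw0 hPareto
end
end

section
/- Optimal source beamforming for a single relay (Remark 3, case R = 1): Let R = 1, let H_1 ∈ ℂ^{M_1×N_T} be nonzero, let λ_max be the largest eigenvalue of the Hermitian matrix H_1ᴴ H_1, let v ∈ ℂ^{N_T} be a unit eigenvector of H_1ᴴ H_1 with eigenvalue λ_max, and set g^♯ := √(P_s) v. Assume f̃_1 ≠ 0 and 0 ≤ ε_1 ≤ ‖f̃_1‖₂. Then g^♯ attains the supremum: for every g ∈ ℂ^{N_T} with ‖g‖₂² ≤ P_s, SNR₁(‖H_1 g‖₂²) ≤ SNR₁(‖H_1 g^♯‖₂²) = SNR₁(P_s λ_max), where SNR₁(w) := sup over real c with 0 ≤ c ≤ √(P_1/(σ_R² + w)) of min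 over a ∈ {‖f̃_1‖₂ − ε_1, ‖f̃_1‖₂ + ε_1} of (a c √w)² / (σ_R² a² c² + σ_D²). -/
/-!
The effective channel gain `w = ‖H₁ g‖²` is a Rayleigh quotient of the Gram matrix `H₁ᴴ H₁`, so it
is at most `λ_max ‖g‖² ≤ P_s λ_max`, with equality at `g♯ = √P_s v`. It therefore suffices that
`SNR₁` is monotone in `w`: a power factor `c` admissible for `w` is rescaled to one admissible for a
larger `w'` with the same relay transmit power `c² (σ_R² + w)`, and for fixed relay power each
branch `a² c² w / (σ_R² a² c² + σ_D²)` grows with `w`.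
-/

open Matrix
open scoped ComplexOrder

noncomputable section

/-- The single-relay worst-case SNR as a function of the effective channel
gain `w`, optimized over the scalar power allocation factor `c`. -/
def SNR1 (σR2 σD2 P1 φ1 ε1 : ℝ) (w : ℝ) : ℝ :=
  sSup {s : ℝ | ∃ c : ℝ, 0 ≤ c ∧ c ≤ Real.sqrt (P1 / (σR2 + w)) ∧
    s = min
      (((φ1 - ε1) * c * Real.sqrt w) ^ 2 / (σR2 * (φ1 - ε1) ^ 2 * c ^ 2 + σD2))
      (((φ1 + ε1) * c * Real.sqrt w) ^ 2 / (σR2 * (φ1 + ε1) ^ 2 * c ^ 2 + σD2))}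

open Module.End InnerProductSpace

section Rayleigh

variable {𝕜 E F : Type*} [RCLike 𝕜] [NormedAddCommGroup E] [InnerProductSpace 𝕜 E]
  [NormedAddCommGroup F] [InnerProductSpace 𝕜 F]

theorem LinearMap.IsSymmetric.re_inner_apply_le [FiniteDimensional 𝕜 E] {T : E →ₗ[𝕜] E}
    (hT : T.IsSymmetric) {c : ℝ} (hc : ∀ μ : ℝ, HasEigenvalue T μ → μ ≤ c) (x : E) :
    RCLike.re ⟪x, T x⟫_𝕜 ≤ c * ‖x‖ ^ 2 := by
  set b := hT.eigenvectorBasis rfl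
  set r := b.repr x
  calc RCLike.re ⟪x, T x⟫_𝕜 = ∑ i, hT.eigenvalues rfl i * ‖r i‖ ^ 2 := by
        rw [← b.repr.inner_map_map, PiLp.inner_apply, map_sum]
        refine Finset.sum_congr rfl fun i _ => ?_
        rw [hT.eigenvectorBasis_apply_self_apply, ← smul_eq_mul, inner_smul_real_right,
          RCLike.smul_re, inner_self_eq_norm_sq]
    _ ≤ ∑ i, c * ‖r i‖ ^ 2 := by
        gcongr with i
        exact hc _ (hT.hasEigenvalue_eigenvalues rfl i)
    _ = c * ‖x‖ ^ 2 := by rw [← Finset.mul_sum, ← EuclideanSpace.norm_sq_eq, b.repr.norm_map]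

theorem LinearMap.norm_apply_sq_eq_re_inner_adjoint_comp_self [FiniteDimensional 𝕜 E]
    [FiniteDimensional 𝕜 F] (S : E →ₗ[𝕜] F) (x : E) :
    ‖S x‖ ^ 2 = RCLike.re ⟪x, (S.adjoint ∘ₗ S) x⟫_𝕜 := by
  rw [LinearMap.comp_apply, LinearMap.adjoint_inner_right, inner_self_eq_norm_sq]

end Rayleigh

section MatrixGram

variable {𝕜 m n : Type*} [RCLike 𝕜] [Fintype m] [Fintype n] [DecidableEq n]

theorem Matrix.sum_norm_mulVec_sq (H : Matrix m n 𝕜) (g : n → 𝕜) :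
    ∑ j, ‖(H *ᵥ g) j‖ ^ 2 = ‖toEuclideanLin H (WithLp.toLp 2 g)‖ ^ 2 := by
  rw [EuclideanSpace.norm_sq_eq]; rfl

variable [DecidableEq m]

theorem Matrix.toEuclideanLin_conjTranspose_mul_self (H : Matrix m n 𝕜) :
    toEuclideanLin (Hᴴ * H) = (toEuclideanLin H).adjoint ∘ₗ toEuclideanLin H := by
  rw [← toEuclideanLin_conjTranspose_eq_adjoint]
  exact toLpLin_mul _ _ _ _ _

theorem Matrix.sum_norm_mulVec_sq_le (H : Matrix m n 𝕜) {c : ℝ}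
    (hc : ∀ (μ : ℝ) (x : n → 𝕜), x ≠ 0 → (Hᴴ * H) *ᵥ x = (μ : 𝕜) • x → μ ≤ c) (g : n → 𝕜) :
    ∑ j, ‖(H *ᵥ g) j‖ ^ 2 ≤ c * ∑ k, ‖g k‖ ^ 2 := by
  rw [H.sum_norm_mulVec_sq, ← EuclideanSpace.norm_sq_eq (WithLp.toLp 2 g),
    LinearMap.norm_apply_sq_eq_re_inner_adjoint_comp_self,
    ← toEuclideanLin_conjTranspose_mul_self]
  have hT := isSymmetric_toEuclideanLin_iff.mpr (isHermitian_conjTranspose_mul_self H)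
  refine hT.re_inner_apply_le (fun μ hμ => ?_) _
  obtain ⟨x, hx⟩ := hμ.exists_hasEigenvector
  refine hc μ x.ofLp (by simpa using hx.2) ?_
  exact congrArg WithLp.ofLp (mem_eigenspace_iff.mp hx.1)

theorem Matrix.sum_norm_mulVec_sq_of_mulVec_eq_smul (H : Matrix m n 𝕜) {μ : ℝ} {v : n → 𝕜}
    (hv : (Hᴴ * H) *ᵥ v = (μ : 𝕜) • v) :
    ∑ j, ‖(H *ᵥ v) j‖ ^ 2 = μ * ∑ k, ‖v k‖ ^ 2 := by
  rw [H.sum_norm_mulVec_sq, ← EuclideanSpace.norm_sq_eq (WithLp.toLp 2 v),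
    LinearMap.norm_apply_sq_eq_re_inner_adjoint_comp_self,
    ← toEuclideanLin_conjTranspose_mul_self, toLpLin_toLp, toLin'_apply, hv, WithLp.toLp_smul,
    inner_smul_real_right, RCLike.smul_re, inner_self_eq_norm_sq]

end MatrixGram

section SNR

variable {σR2 σD2 : ℝ}

theorem snr_term_le_div (hσR : 0 < σR2) (hσD : 0 < σD2) (a c : ℝ) {w : ℝ} (hw : 0 ≤ w) :
    (a * c * Real.sqrt w) ^ 2 / (σR2 * a ^ 2 * c ^ 2 + σD2) ≤ w / σR2 := by
  rw [mul_pow, Real.sq_sqrt hw, div_le_div_iff₀ (by positivity) hσR]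
  nlinarith [mul_nonneg hw hσD.le]

theorem snr_term_le_of_sq_mul_eq (hσR : 0 < σR2) (hσD : 0 < σD2) (a : ℝ) {c c' w w' : ℝ}
    (hw : 0 ≤ w) (hww : w ≤ w') (hc : c' ^ 2 * (σR2 + w') = c ^ 2 * (σR2 + w)) :
    (a * c * Real.sqrt w) ^ 2 / (σR2 * a ^ 2 * c ^ 2 + σD2) ≤
      (a * c' * Real.sqrt w') ^ 2 / (σR2 * a ^ 2 * c' ^ 2 + σD2) := by
  have hc' : c' ^ 2 ≤ c ^ 2 := by nlinarith [sq_nonneg c, sq_nonneg c']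
  have hgain : c ^ 2 * w ≤ c' ^ 2 * w' := by nlinarith
  simp only [mul_pow, Real.sq_sqrt hw, Real.sq_sqrt (hw.trans hww)]
  rw [div_le_div_iff₀ (by positivity) (by positivity)]
  have h1 : 0 ≤ σR2 * (a ^ 2) ^ 2 * c ^ 2 * c' ^ 2 * (w' - w) := by
    have := sub_nonneg.2 hww; positivity
  have h2 : 0 ≤ σD2 * a ^ 2 * (c' ^ 2 * w' - c ^ 2 * w) := by
    have := sub_nonneg.2 hgain; positivity
  linarith

theorem SNR1_mono (hσR : 0 < σR2) (hσD : 0 < σD2) (P1 φ1 ε1 : ℝ) {w w' : ℝ} (hw : 0 ≤ w)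
    (hww : w ≤ w') : SNR1 σR2 σD2 P1 φ1 ε1 w ≤ SNR1 σR2 σD2 P1 φ1 ε1 w' := by
  have hw' : 0 ≤ w' := hw.trans hww
  refine csSup_le ⟨0, 0, le_rfl, Real.sqrt_nonneg _, by simp⟩ ?_
  rintro _ ⟨c, hc0, hcP, rfl⟩
  -- keep the relay transmit power `c ^ 2 * (σR2 + w)` fixed
  have hpos : 0 < σR2 + w' := by linarith
  set r := (σR2 + w) / (σR2 + w') with hr_def
  have hr : 0 ≤ r := by positivity
  have hc' : (c * Real.sqrt r) ^ 2 * (σR2 + w') = c ^ 2 * (σR2 + w) := by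
    rw [mul_pow, Real.sq_sqrt hr, hr_def]; field_simp
  have hc'P : c * Real.sqrt r ≤ Real.sqrt (P1 / (σR2 + w')) := calc
    c * Real.sqrt r ≤ Real.sqrt (P1 / (σR2 + w)) * Real.sqrt r := by gcongr
    _ = Real.sqrt (P1 / (σR2 + w')) := by
      rw [← Real.sqrt_mul' _ hr, hr_def]; congr 1; field_simp
  refine le_csSup_of_le ⟨w' / σR2, ?_⟩ ⟨c * Real.sqrt r, by positivity, hc'P, rfl⟩ ?_
  · rintro _ ⟨c, -, -, rfl⟩
    exact (min_le_left _ _).trans (snr_term_le_div hσR hσD _ c hw')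
  · exact min_le_min (snr_term_le_of_sq_mul_eq hσR hσD _ hw hww hc')
      (snr_term_le_of_sq_mul_eq hσR hσD _ hw hww hc')

end SNR

theorem stmt16_general (NT M1 : ℕ)
    (H1 : Matrix (Fin M1) (Fin NT) ℂ)
    (ftil1 : Fin M1 → ℂ) (ε1 : ℝ)
    (σR2 σD2 : ℝ) (hσR : 0 < σR2) (hσD : 0 < σD2)
    (P1 Ps : ℝ) (hPs : 0 < Ps)
    (lamMax : ℝ) (v : Fin NT → ℂ)
    (hv : (∑ k, ‖v k‖ ^ 2) = 1)
    (heig : (H1ᴴ * H1).mulVec v = (lamMax : ℂ) • v)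
    (hmax : ∀ (t : ℝ) (v' : Fin NT → ℂ), v' ≠ 0 →
      (H1ᴴ * H1).mulVec v' = (t : ℂ) • v' → t ≤ lamMax)
    (gs : Fin NT → ℂ) (hgs : gs = fun k => (Real.sqrt Ps : ℂ) * v k) :
    (∀ g : Fin NT → ℂ, (∑ k, ‖g k‖ ^ 2) ≤ Ps →
      SNR1 σR2 σD2 P1 (vnorm2 ftil1) ε1 (∑ j, ‖∑ k, H1 j k * g k‖ ^ 2) ≤
        SNR1 σR2 σD2 P1 (vnorm2 ftil1) ε1 (∑ j, ‖∑ k, H1 j k * gs k‖ ^ 2)) ∧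
    SNR1 σR2 σD2 P1 (vnorm2 ftil1) ε1 (∑ j, ‖∑ k, H1 j k * gs k‖ ^ 2) =
      SNR1 σR2 σD2 P1 (vnorm2 ftil1) ε1 (Ps * lamMax) := by
  have hv_gain : ∑ j, ‖(H1 *ᵥ v) j‖ ^ 2 = lamMax := by
    rw [H1.sum_norm_mulVec_sq_of_mulVec_eq_smul heig, hv, mul_one]
  have hgs_gain : ∑ j, ‖(H1 *ᵥ gs) j‖ ^ 2 = Ps * lamMax := by
    have hgs' : gs = (Real.sqrt Ps : ℂ) • v := hgs
    simp only [hgs', mulVec_smul, Pi.smul_apply, smul_eq_mul, norm_mul, mul_pow,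
      Complex.norm_real, Real.norm_eq_abs, sq_abs, Real.sq_sqrt hPs.le, ← Finset.mul_sum, hv_gain]
  have hlam : 0 ≤ lamMax := hv_gain ▸ by positivity
  refine ⟨fun g hg => ?_, congrArg _ hgs_gain⟩
  have hg_gain : ∑ j, ‖(H1 *ᵥ g) j‖ ^ 2 ≤ Ps * lamMax := calc
    _ ≤ lamMax * ∑ k, ‖g k‖ ^ 2 := H1.sum_norm_mulVec_sq_le hmax g
    _ ≤ lamMax * Ps := by gcongr
    _ = Ps * lamMax := mul_comm _ _
  exact hgs_gain ▸ SNR1_mono hσR hσD _ _ _ (by positivity) hg_gain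

theorem stmt16 (NT M1 : ℕ)
    (H1 : Matrix (Fin M1) (Fin NT) ℂ) (hH1 : H1 ≠ 0)
    (ftil1 : Fin M1 → ℂ) (ε1 : ℝ)
    (σR2 σD2 : ℝ) (hσR : 0 < σR2) (hσD : 0 < σD2)
    (P1 Ps : ℝ) (hP1 : 0 < P1) (hPs : 0 < Ps)
    (hf : ftil1 ≠ 0) (hε : 0 ≤ ε1 ∧ ε1 ≤ vnorm2 ftil1)
    (lamMax : ℝ) (v : Fin NT → ℂ)
    (hv : (∑ k, ‖v k‖ ^ 2) = 1)
    (heig : (H1ᴴ * H1).mulVec v = (lamMax : ℂ) • v)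
    (hmax : ∀ (t : ℝ) (v' : Fin NT → ℂ), v' ≠ 0 →
      (H1ᴴ * H1).mulVec v' = (t : ℂ) • v' → t ≤ lamMax)
    (gs : Fin NT → ℂ) (hgs : gs = fun k => (Real.sqrt Ps : ℂ) * v k) :
    (∀ g : Fin NT → ℂ, (∑ k, ‖g k‖ ^ 2) ≤ Ps →
      SNR1 σR2 σD2 P1 (vnorm2 ftil1) ε1 (∑ j, ‖∑ k, H1 j k * g k‖ ^ 2) ≤
        SNR1 σR2 σD2 P1 (vnorm2 ftil1) ε1 (∑ j, ‖∑ k, H1 j k * gs k‖ ^ 2)) ∧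
    SNR1 σR2 σD2 P1 (vnorm2 ftil1) ε1 (∑ j, ‖∑ k, H1 j k * gs k‖ ^ 2) =
      SNR1 σR2 σD2 P1 (vnorm2 ftil1) ε1 (Ps * lamMax) :=
  stmt16_general NT M1 H1 ftil1 ε1 σR2 σD2 hσR hσD P1 Ps hPs lamMax v hv heig hmax gs hgs
end
end
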